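/- arXiv:1705.07124 — 8 statements merged into one kernel-verified Lean document; each statement's English description precedes it below -/
import Mathlib

section
/- Let H be a nontrivial complex Hilbert space and S ∈ B(H). The following are equivalent: (i) S is not invertible in B(H); (ii) T is Birkhoff–James orthogonal to S for every unitary operator T ∈ B(H). -/
/-!
If `T` is unitary and `‖T + λS‖ < ‖T‖ = 1`, then `-λS` lies in the open unit ball around the
unit `T`, whose inverse has norm one, so `-λS` and hence `S` is invertible. Conversely, an
invertible `S` has a polar decomposition `S = U |S|` with `U` unitary and `|S|` strictly
positive; then `U - ‖|S|‖⁻¹ S = U (1 - ‖|S|‖⁻¹ |S|)`, and the spectrum of `1 - ‖|S|‖⁻¹ |S|`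
lies in `[0, 1)`, so its norm is less than `1 = ‖U‖`.
-/

section CStarRing

variable {A : Type*} [NormedRing A] [StarRing A] [CStarRing A] [CompleteSpace A]

theorem isUnit_of_norm_sub_unitary_lt_one {u x : A} (hu : u ∈ unitary A) (h : ‖x - u‖ < 1) :
    IsUnit x := by
  nontriviality A
  refine (Units.ofNearby (Unitary.toUnits ⟨u, hu⟩) x ?_).isUnit
  simpa [CStarRing.norm_of_mem_unitary (Unitary.star_mem hu)] using h

theorem isUnit_of_norm_add_smul_lt_norm_unitary {𝕜 : Type*} [NormedField 𝕜]
    [NormedAlgebra 𝕜 A] {T S : A} {lam : 𝕜} (hT : T ∈ unitary A) (h : ‖T + lam • S‖ < ‖T‖) :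
    IsUnit S := by
  nontriviality A
  have hlam : lam ≠ 0 := by rintro rfl; simp at h
  have hunit : IsUnit (-(lam • S)) := isUnit_of_norm_sub_unitary_lt_one hT <| by
    rwa [← norm_neg, neg_sub, sub_neg_eq_add, ← CStarRing.norm_of_mem_unitary hT]
  rwa [IsUnit.neg_iff, ← Units.smul_mk0 hlam, isUnit_smul_iff] at hunit

end CStarRing

section CStarAlgebra

variable {A : Type*} [CStarAlgebra A] [PartialOrder A] [StarOrderedRing A]

theorem IsUnit.isStrictlyPositive_cfcAbs {S : A} (hS : IsUnit S) :
    IsStrictlyPositive (CFC.abs S) :=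
  IsStrictlyPositive.sqrt _ <|
    IsStrictlyPositive.iff_of_unital.mpr ⟨star_mul_self_nonneg S, hS.star.mul hS⟩

theorem IsUnit.exists_mem_unitary_eq_mul_cfcAbs {S : A} (hS : IsUnit S) :
    ∃ U ∈ unitary A, S = U * CFC.abs S := by
  have hP := hS.isStrictlyPositive_cfcAbs.isUnit
  refine ⟨S * Ring.inverse (CFC.abs S), ?_,
    by rw [mul_assoc, Ring.inverse_mul_cancel _ hP, mul_one]⟩
  refine (hS.mul hP.ringInverse).mem_unitary_of_star_mul_self ?_
  rw [star_mul, ← Ring.inverse_star, (CFC.abs_nonneg S).isSelfAdjoint.star_eq, mul_assoc,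
    ← mul_assoc (star S), ← CFC.abs_mul_abs, ← mul_assoc, ← mul_assoc,
    Ring.inverse_mul_cancel _ hP, one_mul, Ring.mul_inverse_cancel _ hP]

theorem IsStrictlyPositive.norm_one_sub_inv_norm_smul_lt_one {P : A} (hP : IsStrictlyPositive P) :
    ‖1 - ‖P‖⁻¹ • P‖ < 1 := by
  nontriviality A
  have hnorm : 0 < ‖P‖ := norm_pos_iff.mpr hP.isUnit.ne_zero
  have hcfc : 1 - ‖P‖⁻¹ • P = cfc (fun x : ℝ => 1 - ‖P‖⁻¹ * x) P := by
    rw [cfc_sub (fun _ => 1) (‖P‖⁻¹ * ·) P, cfc_const 1 P, map_one, cfc_const_mul_id _ P]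
  rw [hcfc]
  refine norm_cfc_lt one_pos fun x hx => ?_
  have hx0 : 0 < x := hP.spectrum_pos hx
  have hxP : x ≤ ‖P‖ := by simpa [abs_of_pos hx0] using spectrum.norm_le_norm_of_mem hx
  rw [Real.norm_eq_abs, abs_lt]
  constructor
  · nlinarith [inv_mul_cancel₀ hnorm.ne', inv_pos.mpr hnorm]
  · nlinarith [inv_pos.mpr hnorm]

theorem IsUnit.exists_unitary_norm_add_smul_lt [Nontrivial A] {S : A} (hS : IsUnit S) :
    ∃ T ∈ unitary A, ∃ lam : ℂ, ‖T + lam • S‖ < ‖T‖ := by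
  obtain ⟨U, hU, hSU⟩ := hS.exists_mem_unitary_eq_mul_cfcAbs
  set t := ‖CFC.abs S‖⁻¹
  have hfactor : U + (-(t : ℂ)) • S = U * (1 - t • CFC.abs S) := by
    rw [neg_smul, Complex.coe_smul, mul_sub, mul_one, mul_smul_comm, ← hSU, sub_eq_add_neg]
  refine ⟨U, hU, -(t : ℂ), ?_⟩
  rw [hfactor, CStarRing.norm_mem_unitary_mul _ hU, CStarRing.norm_of_mem_unitary hU]
  exact hS.isStrictlyPositive_cfcAbs.norm_one_sub_inv_norm_smul_lt_one

end CStarAlgebra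

/-- An operator `S` on a nontrivial complex Hilbert space `H` is not invertible iff every
unitary operator `T ∈ B(H)` is Birkhoff–James orthogonal to `S`. -/
theorem not_isUnit_iff_forall_unitary_birkhoff_orthogonal
    {H : Type*} [NormedAddCommGroup H] [InnerProductSpace ℂ H] [CompleteSpace H] [Nontrivial H]
    (S : H →L[ℂ] H) :
    ¬ IsUnit S ↔
      ∀ T : H →L[ℂ] H, T ∈ unitary (H →L[ℂ] H) → ∀ lam : ℂ, ‖T‖ ≤ ‖T + lam • S‖ := by
  refine ⟨fun hS T hT lam => ?_, fun h hS => ?_⟩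
  · by_contra! hlt
    exact hS (isUnit_of_norm_add_smul_lt_norm_unitary hT hlt)
  · obtain ⟨T, hT, lam, hlt⟩ := hS.exists_unitary_norm_add_smul_lt
    exact (h T hT lam).not_gt hlt
end

section
/- Let H be a finite-dimensional (nontrivial) complex Hilbert space and T, S ∈ B(H). Then T is Birkhoff–James orthogonal to S if and only if there exists a unit vector ξ ∈ H such that |T|ξ = ∥T∥ξ and ⟨Tξ, Sξ⟩ = 0. -/
/-!
A unit vector `ξ` satisfies `|T|ξ = ‖T‖ξ` exactly when `‖Tξ‖ = ‖T‖`, so these vectors are the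
unit vectors of the `‖T‖`-eigenspace `E` of `|T|`. If `T ⊥_B S`, then for every `u : ℂ` a limit of
norm-attaining vectors of `T + δuS` (with `δ → 0⁺`) is a unit vector `x ∈ E` with
`0 ≤ Re (u ⟪Tx, Sx⟫)`. By the Toeplitz–Hausdorff theorem, the numerical range of the form
`(x, y) ↦ ⟪Tx, Sy⟫` on `E` is convex; it is compact and meets every closed half-plane through `0`,
so it contains `0`. Conversely, `⟪Tξ, Sξ⟫ = 0` gives `‖(T + λS)ξ‖ ≥ ‖Tξ‖ = ‖T‖` by Pythagoras.
-/

open Metric Set RCLike ComplexConjugate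
open scoped InnerProduct InnerProductSpace

theorem IsCompact.exists_mem_of_forall_pos_exists_mem {X : Type*} [TopologicalSpace X] {K : Set X}
    (hK : IsCompact K) {P : Set (ℝ × X)} (hP : IsClosed P)
    (h : ∀ δ > 0, ∃ x ∈ K, (δ, x) ∈ P) : ∃ x ∈ K, ((0 : ℝ), x) ∈ P := by
  set Z := (Icc 0 1 ×ˢ K) ∩ P
  have hZ : IsClosed (Prod.fst '' Z) :=
    (((isCompact_Icc.prod hK).inter_right hP).image continuous_fst).isClosed
  have hsub : Ioc 0 1 ⊆ Prod.fst '' Z := fun δ hδ =>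
    let ⟨x, hx, hxP⟩ := h δ hδ.1
    ⟨(δ, x), ⟨⟨Ioc_subset_Icc_self hδ, hx⟩, hxP⟩, rfl⟩
  have h0 : (0 : ℝ) ∈ closure (Ioc 0 1) := by simp [closure_Ioc zero_ne_one]
  obtain ⟨⟨_, x⟩, ⟨⟨-, hx⟩, hxP⟩, rfl⟩ := hZ.closure_subset_iff.mpr hsub h0
  exact ⟨x, hx, hxP⟩

theorem Complex.zero_mem_of_convex_of_forall_exists_re_mul_nonneg {W : Set ℂ}
    (hconv : Convex ℝ W) (hclosed : IsClosed W) (h : ∀ u : ℂ, ∃ w ∈ W, 0 ≤ (u * w).re) :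
    (0 : ℂ) ∈ W := by
  by_contra h0
  obtain ⟨f, c, hf0, hfW⟩ := RCLike.geometric_hahn_banach_point_closed (𝕜 := ℂ) hconv hclosed h0
  obtain ⟨w, hw, hre⟩ := h (-f 1)
  have hfw : f w = f 1 * w := by rw [mul_comm, ← smul_eq_mul, ← map_smul, smul_eq_mul, mul_one]
  have := hfW w hw
  simp only [map_zero] at hf0
  simp only [neg_mul, Complex.neg_re, RCLike.re_to_complex, hfw] at hre this
  linarith

section FiniteDimensionalDomain

variable {𝕜 E F : Type*} [RCLike 𝕜] [NormedAddCommGroup E] [NormedSpace 𝕜 E]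
  [FiniteDimensional 𝕜 E] [Nontrivial E]

theorem ContinuousLinearMap.exists_norm_eq_one_and_norm_apply_eq_opNorm [NormedAddCommGroup F]
    [NormedSpace 𝕜 F] (f : E →L[𝕜] F) : ∃ x, ‖x‖ = 1 ∧ ‖f x‖ = ‖f‖ := by
  have := FiniteDimensional.proper_rclike 𝕜 E
  have hK : IsCompact ((fun x => ‖f x‖) '' sphere 0 1) :=
    (isCompact_sphere 0 1).image (by fun_prop)
  obtain ⟨x, hx, hfx⟩ := f.sSup_sphere_eq_norm ▸ hK.sSup_mem
    ((nonempty_coe_sort.mp (NormedSpace.sphere_nonempty_rclike 𝕜 zero_le_one)).image _)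
  exact ⟨x, by simpa using hx, hfx⟩

theorem exists_norm_apply_eq_opNorm_and_re_mul_inner_nonneg [NormedAddCommGroup F]
    [InnerProductSpace 𝕜 F] {T S : E →L[𝕜] F} (h : ∀ c : 𝕜, ‖T‖ ≤ ‖T + c • S‖) (u : 𝕜) :
    ∃ x, ‖x‖ = 1 ∧ ‖T x‖ = ‖T‖ ∧ 0 ≤ re (u * ⟪T x, S x⟫_𝕜) := by
  have := FiniteDimensional.proper_rclike 𝕜 E
  -- for `δ > 0` the second condition follows from the first since `‖T x‖ ≤ ‖T‖` on the sphere
  let P : Set (ℝ × E) := {p | ‖T‖ ≤ ‖T p.2 + (p.1 : 𝕜) • u • S p.2‖} ∩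
    {p | 0 ≤ 2 * re ⟪T p.2, u • S p.2⟫_𝕜 + p.1 * ‖u • S p.2‖ ^ 2}
  have hP : IsClosed P :=
    (isClosed_le continuous_const (by fun_prop)).inter (isClosed_le continuous_const (by fun_prop))
  have hTle (x : E) (hx : ‖x‖ = 1) : ‖T x‖ ≤ ‖T‖ := by simpa [hx] using T.le_opNorm x
  obtain ⟨x, hx, hxP⟩ := (isCompact_sphere 0 1).exists_mem_of_forall_pos_exists_mem hP
    fun δ hδ => by
      obtain ⟨x, hx, hmax⟩ := (T + ((δ : 𝕜) * u) • S).exists_norm_eq_one_and_norm_apply_eq_opNorm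
      have hnorm : ‖T‖ ≤ ‖T x + (δ : 𝕜) • u • S x‖ := by
        simpa [mul_smul] using (h ((δ : 𝕜) * u)).trans_eq hmax.symm
      have hexp : ‖T x + (δ : 𝕜) • u • S x‖ ^ 2 = ‖T x‖ ^ 2 +
          δ * (2 * re ⟪T x, u • S x⟫_𝕜 + δ * ‖u • S x‖ ^ 2) := by
        rw [@norm_add_sq 𝕜, inner_smul_right, re_ofReal_mul, norm_smul, norm_ofReal, abs_of_pos hδ]
        ring
      refine ⟨x, by simpa using hx, hnorm, nonneg_of_mul_nonneg_right ?_ hδ⟩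
      nlinarith [hTle x hx, norm_nonneg (T x), norm_nonneg T]
  have hx1 : ‖x‖ = 1 := by simpa using hx
  simp only [P, mem_inter_iff, mem_ofPred_eq, ofReal_zero, zero_smul, add_zero, zero_mul,
    inner_smul_right] at hxP
  exact ⟨x, hx1, (hTle x hx1).antisymm hxP.1, by linarith [hxP.2]⟩

end FiniteDimensionalDomain

theorem ContinuousLinearMap.opNorm_le_opNorm_add_smul_of_inner_eq_zero {𝕜 E F : Type*}
    [RCLike 𝕜] [NormedAddCommGroup E] [NormedSpace 𝕜 E] [NormedAddCommGroup F]
    [InnerProductSpace 𝕜 F] {T S : E →L[𝕜] F} {ξ : E} (hξ : ‖ξ‖ = 1) (hTξ : ‖T ξ‖ = ‖T‖)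
    (h : ⟪T ξ, S ξ⟫_𝕜 = 0) (c : 𝕜) : ‖T‖ ≤ ‖T + c • S‖ := by
  have hpyth := norm_add_sq_eq_norm_sq_add_norm_sq_of_inner_eq_zero (T ξ) (c • S ξ)
    (by rw [inner_smul_right, h, mul_zero])
  calc ‖T‖ = ‖T ξ‖ := hTξ.symm
    _ ≤ ‖T ξ + c • S ξ‖ := by nlinarith [norm_nonneg (T ξ), norm_nonneg (T ξ + c • S ξ)]
    _ ≤ ‖T + c • S‖ := by simpa [hξ] using (T + c • S).le_opNorm ξ

section AbsoluteValue

variable {H : Type*} [NormedAddCommGroup H] [InnerProductSpace ℂ H] [CompleteSpace H]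

namespace ContinuousLinearMap

theorem norm_apply_sq_le_norm_mul_re_inner_apply {A : H →L[ℂ] H} (hA : 0 ≤ A) (x : H) :
    ‖A x‖ ^ 2 ≤ ‖A‖ * re ⟪A x, x⟫_ℂ := by
  set R := CFC.sqrt A
  have hRR : R† ∘L R = A := by
    rw [← star_eq_adjoint, (CFC.sqrt_nonneg A).isSelfAdjoint.star_eq, ← mul_def,
      CFC.sqrt_mul_sqrt_self A]
  have hR : ‖R‖ ^ 2 = ‖A‖ := by rw [CFC.norm_sqrt A, Real.sq_sqrt (norm_nonneg A)]
  calc ‖A x‖ ^ 2 = ‖R (R x)‖ ^ 2 := by rw [← CFC.sqrt_mul_sqrt_self A]; rfl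
    _ ≤ (‖R‖ * ‖R x‖) ^ 2 := by gcongr; exact R.le_opNorm (R x)
    _ = ‖A‖ * re ⟪A x, x⟫_ℂ := by
      rw [mul_pow, hR, apply_norm_sq_eq_inner_adjoint_left, hRR]

theorem apply_eq_norm_smul_iff_of_nonneg {A : H →L[ℂ] H} (hA : 0 ≤ A) (x : H) :
    A x = ‖A‖ • x ↔ ‖A x‖ = ‖A‖ * ‖x‖ := by
  refine ⟨fun h => by rw [h, norm_smul, norm_norm], fun h => ?_⟩
  have hle := A.norm_apply_sq_le_norm_mul_re_inner_apply hA x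
  have hsq : ‖A x - ‖A‖ • x‖ ^ 2 = 2 * ‖A‖ * (‖A‖ * ‖x‖ ^ 2 - re ⟪A x, x⟫_ℂ) := by
    rw [@norm_sub_sq ℂ, h, real_smul_eq_coe_smul (K := ℂ), inner_smul_right, re_ofReal_mul,
      norm_smul, norm_ofReal, abs_norm]
    ring
  rw [h] at hle
  rw [← sub_eq_zero, ← norm_eq_zero, ← sq_eq_zero_iff]
  nlinarith [sq_nonneg ‖A x - ‖A‖ • x‖]

theorem norm_cfcAbs_apply (T : H →L[ℂ] H) (x : H) : ‖CFC.abs T x‖ = ‖T x‖ := by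
  have h : (CFC.abs T)† ∘L CFC.abs T = T† ∘L T := by
    rw [← star_eq_adjoint, (CFC.abs_nonneg T).isSelfAdjoint.star_eq, ← mul_def,
      CFC.abs_mul_abs, star_eq_adjoint, mul_def]
  rw [← sq_eq_sq₀ (norm_nonneg _) (norm_nonneg _), apply_norm_sq_eq_inner_adjoint_left,
    apply_norm_sq_eq_inner_adjoint_left, h]

theorem cfcAbs_apply_eq_norm_smul_iff (T : H →L[ℂ] H) (x : H) :
    CFC.abs T x = ‖T‖ • x ↔ ‖T x‖ = ‖T‖ * ‖x‖ := by
  rw [← CFC.norm_abs, apply_eq_norm_smul_iff_of_nonneg (CFC.abs_nonneg T), norm_cfcAbs_apply]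

end ContinuousLinearMap

end AbsoluteValue

namespace LinearMap

variable {E : Type*} [NormedAddCommGroup E] [InnerProductSpace ℂ E]

def numericalRange (B : E →ₗ⋆[ℂ] E →ₗ[ℂ] ℂ) : Set ℂ := (fun x => B x x) '' sphere 0 1

variable (B : E →ₗ⋆[ℂ] E →ₗ[ℂ] ℂ)

theorem apply_smul_smul (c : ℂ) (x : E) : B (c • x) (c • x) = ((‖c‖ ^ 2 : ℝ) : ℂ) * B x x := by
  simp only [map_smul, map_smulₛₗ, smul_apply, smul_eq_mul]
  rw [mul_left_comm, ← mul_assoc, Complex.conj_mul']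
  push_cast
  ring

theorem div_norm_sq_mem_numericalRange {v : E} (hv : v ≠ 0) :
    B v v / ((‖v‖ ^ 2 : ℝ) : ℂ) ∈ B.numericalRange := by
  have hv' : ‖v‖ ≠ 0 := norm_ne_zero_iff.mpr hv
  refine ⟨((‖v‖⁻¹ : ℝ) : ℂ) • v, ?_, ?_⟩
  · simp [norm_smul, hv']
  · simp only [apply_smul_smul, Complex.norm_real, norm_inv, norm_norm]
    field_simp
    push_cast
    ring

theorem exists_norm_eq_one_im_apply_add_apply_smul_eq_zero (x y : E) :
    ∃ ω : ℂ, ‖ω‖ = 1 ∧ (B x (ω • y) + B (ω • y) x).im = 0 := by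
  obtain ⟨ω, hω, hωd⟩ := Complex.exists_norm_eq_mul_self (B x y - conj (B y x))
  refine ⟨ω, hω, ?_⟩
  have := congrArg Complex.im hωd
  simp only [Complex.ofReal_im, Complex.mul_im, Complex.sub_re, Complex.sub_im,
    Complex.conj_re, Complex.conj_im] at this
  simp only [map_smul, smul_eq_mul, map_smulₛₗ, smul_apply, Complex.add_im, Complex.mul_im,
    Complex.conj_re, Complex.conj_im, neg_mul]
  linarith

theorem ofReal_mem_numericalRange (h1 : 1 ∈ B.numericalRange) (h0 : 0 ∈ B.numericalRange)
    {s : ℝ} (hs : s ∈ Icc 0 1) : (s : ℂ) ∈ B.numericalRange := by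
  obtain ⟨x, hx, hBx : B x x = 1⟩ := h1
  obtain ⟨y, hy, hBy : B y y = 0⟩ := h0
  simp only [mem_sphere_iff_norm, sub_zero] at hx hy
  obtain ⟨ω, hω, hr⟩ := B.exists_norm_eq_one_im_apply_add_apply_smul_eq_zero x y
  set y' := ω • y
  have hy' : ‖y'‖ = 1 := by rw [norm_smul, hω, hy, one_mul]
  have hBy' : B y' y' = 0 := by rw [apply_smul_smul, hBy, mul_zero]
  set r := B x y' + B y' x
  -- the choice of `ω` makes the form real on the segment `N` from `y'` to `x`, so the
  -- intermediate value theorem applies to its normalised values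
  set N : ℝ → E := fun t => (t : ℂ) • x + ((1 - t : ℝ) : ℂ) • y'
  have hBN (t : ℝ) : B (N t) (N t) = ((t ^ 2 + t * (1 - t) * r.re : ℝ) : ℂ) := by
    simp only [N, map_add, map_smulₛₗ, add_apply, smul_apply, smul_eq_mul, Complex.conj_ofReal,
      RingHom.id_apply, hBx, hBy']
    have : B x y' + B y' x = (r.re : ℂ) := Complex.ext rfl hr
    push_cast
    linear_combination (↑t * (1 - ↑t) : ℂ) * this
  have hN (t : ℝ) : N t ≠ 0 := by
    intro h
    have h' : (t : ℂ) • x = (-((1 - t : ℝ) : ℂ)) • y' := by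
      rw [neg_smul]; exact eq_neg_of_add_eq_zero_left h
    have ht := congrArg (fun v => B v v) h'
    simp only [apply_smul_smul, hBx, hBy', mul_zero, mul_one, Complex.ofReal_eq_zero,
      Complex.norm_real, Real.norm_eq_abs, sq_abs, pow_eq_zero_iff two_ne_zero] at ht
    rw [ht] at h
    simp only [N, Complex.ofReal_zero, zero_smul, zero_add, sub_zero, Complex.ofReal_one,
      one_smul] at h
    simp [h] at hy'
  set g : ℝ → ℝ := fun t => t ^ 2 + t * (1 - t) * r.re - s * ‖N t‖ ^ 2
  have hg : Continuous g := by fun_prop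
  obtain ⟨t, -, hgt⟩ : (0 : ℝ) ∈ g '' Icc 0 1 := intermediate_value_Icc zero_le_one
    hg.continuousOn ⟨by simp [g, N, hy', hs.1], by simp [g, N, hx, hs.2]⟩
  have hmem := B.div_norm_sq_mem_numericalRange (hN t)
  rwa [hBN, show t ^ 2 + t * (1 - t) * r.re = s * ‖N t‖ ^ 2 by linarith, Complex.ofReal_mul,
    mul_div_cancel_right₀ _ (by simpa using hN t)] at hmem

theorem convex_numericalRange : Convex ℝ B.numericalRange := by
  intro a ha b hb s t hs ht hst
  obtain rfl | hab := eq_or_ne a b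
  · rwa [← add_smul, hst, one_smul]
  set B' := (a - b)⁻¹ • (B - b • innerₛₗ ℂ)
  have hB' {x : E} (hx : x ∈ sphere 0 1) : B' x x = (a - b)⁻¹ * (B x x - b) := by
    rw [mem_sphere_zero_iff_norm] at hx
    simp [B', inner_self_eq_norm_sq_to_K, hx]
  have hab' : a - b ≠ 0 := sub_ne_zero.mpr hab
  have h1 : 1 ∈ B'.numericalRange := by
    obtain ⟨x, hx, hBx : B x x = a⟩ := ha
    exact ⟨x, hx, by simp only [hB' hx, hBx, inv_mul_cancel₀ hab']⟩
  have h0 : 0 ∈ B'.numericalRange := by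
    obtain ⟨x, hx, hBx : B x x = b⟩ := hb
    exact ⟨x, hx, by simp only [hB' hx, hBx, sub_self, mul_zero]⟩
  obtain ⟨x, hx, hBx : B' x x = s⟩ := B'.ofReal_mem_numericalRange h1 h0 ⟨hs, by linarith⟩
  refine ⟨x, hx, ?_⟩
  rw [hB' hx, inv_mul_eq_iff_eq_mul₀ hab'] at hBx
  obtain rfl : t = 1 - s := by linarith
  simp only [Complex.real_smul, Complex.ofReal_sub, Complex.ofReal_one]
  linear_combination hBx

end LinearMap

open ContinuousLinearMap in
/-- On a finite-dimensional nontrivial complex Hilbert space `H`, `T` is Birkhoff–James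
orthogonal to `S` iff there is a unit vector `ξ` with `|T|ξ = ‖T‖ξ` and `⟪Tξ, Sξ⟫ = 0`. -/
theorem birkhoff_orthogonal_iff_exists_unit_vector_finiteDimensional
    {H : Type*} [NormedAddCommGroup H] [InnerProductSpace ℂ H]
    [FiniteDimensional ℂ H] [Nontrivial H] (T S : H →L[ℂ] H) :
    (∀ lam : ℂ, ‖T‖ ≤ ‖T + lam • S‖) ↔
      ∃ ξ : H, ‖ξ‖ = 1 ∧ CFC.sqrt (star T * T) ξ = ‖T‖ • ξ ∧
        (inner ℂ (T ξ) (S ξ) : ℂ) = 0 := by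
  have := FiniteDimensional.complete ℂ H
  constructor
  · intro horth
    set E := Module.End.eigenspace (CFC.abs T).toLinearMap (‖T‖ : ℂ)
    have hE {x : H} : x ∈ E ↔ ‖T x‖ = ‖T‖ * ‖x‖ := by
      rw [Module.End.mem_eigenspace_iff, Complex.coe_smul, ← cfcAbs_apply_eq_norm_smul_iff]
      rfl
    let B : E →ₗ⋆[ℂ] E →ₗ[ℂ] ℂ :=
      ((innerₛₗ ℂ).comp ((T : H →ₗ[ℂ] H) ∘ₗ E.subtype)).compl₂ ((S : H →ₗ[ℂ] H) ∘ₗ E.subtype)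
    have hW (u : ℂ) : ∃ w ∈ B.numericalRange, 0 ≤ (u * w).re := by
      obtain ⟨x, hx, hTx, hre⟩ := exists_norm_apply_eq_opNorm_and_re_mul_inner_nonneg horth u
      exact ⟨_, ⟨⟨x, hE.mpr (by rw [hTx, hx, mul_one])⟩, by simpa using hx, rfl⟩, hre⟩
    have hclosed : IsClosed B.numericalRange := by
      have hB : Continuous fun x : E => B x x := show Continuous fun x : E => ⟪T x, S x⟫_ℂ by
        fun_prop
      exact ((isCompact_sphere 0 1).image hB).isClosed
    obtain ⟨ξ, hξ, hBξ⟩ := Complex.zero_mem_of_convex_of_forall_exists_re_mul_nonneg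
      B.convex_numericalRange hclosed hW
    exact ⟨ξ, by simpa using hξ, (cfcAbs_apply_eq_norm_smul_iff T ξ).mpr (hE.mp ξ.2), hBξ⟩
  · rintro ⟨ξ, hξ, hAξ, horth⟩
    exact opNorm_le_opNorm_add_smul_of_inner_eq_zero hξ
      (by simpa [hξ] using (cfcAbs_apply_eq_norm_smul_iff T ξ).mp hAξ) horth
end

section
/- Let H be a finite-dimensional complex Hilbert space, let H₀ ≠ {0} be a subspace of H, let P ∈ B(H) be the orthogonal projection onto H₀, and let S ∈ B(H). Then P is Birkhoff–James orthogonal to S if and only if there exists a unit vector ξ ∈ H₀ such that ⟨Sξ, ξ⟩ = 0. -/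
/-!
The numerical range `W` of the compression of `S` to `H₀` is convex (Toeplitz–Hausdorff) and,
`H₀` being finite-dimensional, compact. If `0 ∉ W`, a functional separating `0` from `W` gives a
rotation `κ` and `u > 0` with `u ‖ξ‖² ≤ Re ⟪κ S ξ, ξ⟫` on `H₀`. Splitting `ξ = Pξ + (ξ - Pξ)`,
one finds `‖(P - t κ S) ξ‖² ≤ (1 - t u) ‖ξ‖²` for small `t > 0`, so `‖P - t κ S‖ < 1 = ‖P‖`.
Conversely, if `⟪S ξ, ξ⟫ = 0` for a unit `ξ ∈ H₀`, then `⟪(P + λ S) ξ, ξ⟫ = 1`, whence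
`‖P + λ S‖ ≥ 1 = ‖P‖`.
-/

open scoped InnerProductSpace ComplexConjugate
open RCLike Set NormedSpace

def BirkhoffOrthogonal (𝕜 : Type*) {F : Type*} [SeminormedAddCommGroup F] [SMul 𝕜 F]
    (x y : F) : Prop :=
  ∀ c : 𝕜, ‖x‖ ≤ ‖x + c • y‖

section RCLike

variable {𝕜 E : Type*} [RCLike 𝕜] [NormedAddCommGroup E] [InnerProductSpace 𝕜 E]
  (K : Submodule 𝕜 E) [K.HasOrthogonalProjection]

theorem birkhoffOrthogonal_starProjection_of_inner_eq_zero (S : E →L[𝕜] E) {x : E}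
    (hxK : x ∈ K) (hx : ‖x‖ = 1) (hSx : ⟪S x, x⟫_𝕜 = 0) :
    BirkhoffOrthogonal 𝕜 K.starProjection S := by
  intro c
  have hinner : ⟪(K.starProjection + c • S) x, x⟫_𝕜 = 1 := by
    simp [inner_add_left, inner_smul_left, hSx, K.starProjection_eq_self_iff.mpr hxK,
      inner_self_eq_norm_sq_to_K, hx]
  calc ‖K.starProjection‖ ≤ 1 := K.starProjection_norm_le
    _ = ‖⟪(K.starProjection + c • S) x, x⟫_𝕜‖ := by rw [hinner, norm_one]
    _ ≤ ‖(K.starProjection + c • S) x‖ * ‖x‖ := norm_inner_le_norm _ _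
    _ ≤ ‖K.starProjection + c • S‖ := by
      simpa [hx] using (K.starProjection + c • S).le_opNorm x

theorem norm_starProjection_sub_smul_apply_sq_le (T : E →L[𝕜] E) {u t : ℝ}
    (hT : ∀ x ∈ K, u * ‖x‖ ^ 2 ≤ re ⟪T x, x⟫_𝕜) (ht : 0 ≤ t) (htT : 3 * t * ‖T‖ ^ 2 ≤ u)
    (htu : t * u ≤ 1 / 4) (x : E) :
    ‖(K.starProjection - (t : 𝕜) • T) x‖ ^ 2 ≤ (1 - t * u) * ‖x‖ ^ 2 := by
  set p := K.starProjection x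
  set q := x - p
  have hpyth : ‖x‖ ^ 2 = ‖p‖ ^ 2 + ‖q‖ ^ 2 := by
    simpa using K.norm_sq_eq_add_norm_sq_starProjection x
  have hexpand : ‖(K.starProjection - (t : 𝕜) • T) x‖ ^ 2
      = ‖p‖ ^ 2 - 2 * t * re ⟪T x, p⟫_𝕜 + t ^ 2 * ‖T x‖ ^ 2 := by
    rw [sub_apply, smul_apply, norm_sub_sq (𝕜 := 𝕜),
      inner_smul_right, re_ofReal_mul, ← inner_conj_symm, conj_re, norm_smul, norm_ofReal,
      mul_pow, sq_abs]
    ring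
  have hcross : u * ‖p‖ ^ 2 - ‖T‖ * ‖q‖ * ‖p‖ ≤ re ⟪T x, p⟫_𝕜 := by
    have hsplit : T x = T p + T q := by rw [← map_add, add_sub_cancel]
    have hTq : |re ⟪T q, p⟫_𝕜| ≤ ‖T‖ * ‖q‖ * ‖p‖ :=
      (abs_re_le_norm _).trans ((norm_inner_le_norm _ _).trans
        (mul_le_mul_of_nonneg_right (T.le_opNorm q) (norm_nonneg p)))
    rw [hsplit, inner_add_left, map_add]
    linarith [hT p (K.starProjection_apply_mem x), (abs_le.mp hTq).1]
  have hTx : ‖T x‖ ^ 2 ≤ ‖T‖ ^ 2 * ‖x‖ ^ 2 := by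
    rw [← mul_pow]; exact pow_le_pow_left₀ (norm_nonneg _) (T.le_opNorm x) 2
  have hpos₁ : 0 ≤ t * (u - 3 * t * ‖T‖ ^ 2) := mul_nonneg ht (by linarith)
  have hpos₂ : 0 ≤ 1 / 2 - t * u - t ^ 2 * ‖T‖ ^ 2 := by nlinarith
  rw [hexpand, hpyth]
  rw [hpyth] at hTx
  -- `2 t ‖T‖ ‖p‖ ‖q‖ ≤ ‖q‖² / 2 + 2 t² ‖T‖² ‖p‖²` absorbs the cross term.
  nlinarith [mul_nonneg hpos₁ (sq_nonneg ‖p‖), mul_nonneg hpos₂ (sq_nonneg ‖q‖),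
    sq_nonneg (‖q‖ - 2 * t * ‖T‖ * ‖p‖),
    mul_le_mul_of_nonneg_left hcross (by positivity : 0 ≤ 2 * t),
    mul_le_mul_of_nonneg_left hTx (sq_nonneg t)]

theorem exists_norm_starProjection_sub_smul_lt_one (T : E →L[𝕜] E) {u : ℝ} (hu : 0 < u)
    (hT : ∀ x ∈ K, u * ‖x‖ ^ 2 ≤ re ⟪T x, x⟫_𝕜) :
    ∃ t : ℝ, ‖K.starProjection - (t : 𝕜) • T‖ < 1 := by
  set t := u / (3 * ‖T‖ ^ 2 + 4 * u ^ 2)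
  have hden : 0 < 3 * ‖T‖ ^ 2 + 4 * u ^ 2 := by positivity
  have ht : 0 < t := by positivity
  have hdef : t * (3 * ‖T‖ ^ 2 + 4 * u ^ 2) = u := div_mul_cancel₀ _ hden.ne'
  have htT : 3 * t * ‖T‖ ^ 2 ≤ u := by nlinarith [mul_nonneg ht.le (sq_nonneg u)]
  have htu : t * u ≤ 1 / 4 := by nlinarith [mul_nonneg ht.le (sq_nonneg ‖T‖)]
  have htu₀ : 0 < t * u := mul_pos ht hu
  refine ⟨t, lt_of_le_of_lt (ContinuousLinearMap.opNorm_le_bound _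
    (by linarith : 0 ≤ 1 - t * u / 2) fun x => ?_) (by linarith)⟩
  refine (pow_le_pow_iff_left₀ (norm_nonneg _)
    (mul_nonneg (by linarith) (norm_nonneg x)) two_ne_zero).mp ?_
  calc ‖(K.starProjection - (t : 𝕜) • T) x‖ ^ 2 ≤ (1 - t * u) * ‖x‖ ^ 2 :=
        norm_starProjection_sub_smul_apply_sq_le K T hT ht.le htT htu x
    _ ≤ ((1 - t * u / 2) * ‖x‖) ^ 2 := by
        nlinarith [mul_nonneg (sq_nonneg (t * u)) (sq_nonneg ‖x‖)]

noncomputable def compression (T : E →ₗ[𝕜] E) : K →ₗ[𝕜] K :=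
  (K.orthogonalProjectionOnto : E →ₗ[𝕜] K) ∘ₗ T ∘ₗ K.subtype

theorem inner_compression_apply_self (T : E →ₗ[𝕜] E) (x : K) :
    ⟪compression K T x, x⟫_𝕜 = ⟪T x, x⟫_𝕜 := by
  simp [compression]

end RCLike

section NumericalRange

variable {E : Type*} [NormedAddCommGroup E] [InnerProductSpace ℂ E]

theorem exists_norm_eq_one_im_mul_add_conj_mul_eq_zero (u v : ℂ) :
    ∃ ω : ℂ, ‖ω‖ = 1 ∧ (ω * u + conj ω * v).im = 0 := by
  set w := u - conj v
  set ω := Complex.exp (((-w.arg : ℝ) : ℂ) * Complex.I)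
  have hω : ω * w = ‖w‖ := by
    conv_lhs => rw [← Complex.norm_mul_exp_arg_mul_I w]
    rw [mul_left_comm, ← Complex.exp_add]
    simp
  refine ⟨ω, Complex.norm_exp_ofReal_mul_I _, ?_⟩
  have him : (ω * u + conj ω * v).im = (ω * w).im := by
    simp only [w, Complex.add_im, Complex.mul_im, Complex.conj_re, Complex.conj_im,
      Complex.sub_im, Complex.sub_re]
    ring
  rw [him, hω, Complex.ofReal_im]

def numericalRange (T : E →ₗ[ℂ] E) : Set ℂ :=
  (fun x => ⟪T x, x⟫_ℂ) '' Metric.sphere 0 1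

theorem inner_map_real_smul_add_real_smul_self (T : E →ₗ[ℂ] E) (a b : ℝ) (x y : E) :
    ⟪T ((a : ℂ) • x + (b : ℂ) • y), (a : ℂ) • x + (b : ℂ) • y⟫_ℂ
      = a ^ 2 * ⟪T x, x⟫_ℂ + a * b * (⟪T x, y⟫_ℂ + ⟪T y, x⟫_ℂ) + b ^ 2 * ⟪T y, y⟫_ℂ := by
  simp only [map_add, map_smul, inner_add_left, inner_add_right, inner_smul_left,
    inner_smul_right, Complex.conj_ofReal]
  ring

theorem inner_map_self_eq_norm_sq_mul_normalize (T : E →ₗ[ℂ] E) (x : E) :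
    ⟪T x, x⟫_ℂ = ‖x‖ ^ 2 * ⟪T (normalize x), normalize x⟫_ℂ := by
  conv_lhs => rw [← norm_smul_normalize x]
  rw [← Complex.coe_smul, map_smul, inner_smul_left, inner_smul_right, Complex.conj_ofReal]
  ring

theorem one_sub_smul_add_smul_ne_zero_of_inner_map_self (T : E →ₗ[ℂ] E) {x w : E}
    (hTx : ⟪T x, x⟫_ℂ = 1) (hTw : ⟪T w, w⟫_ℂ = 0) (hw : w ≠ 0) (s : ℝ) :
    ((1 - s : ℝ) : ℂ) • x + (s : ℂ) • w ≠ 0 := by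
  intro h0
  have h1 := congrArg (fun v => ⟪T v, v⟫_ℂ) (eq_neg_of_add_eq_zero_left h0)
  simp only [map_neg, map_smul, inner_neg_left, inner_neg_right, inner_smul_left,
    inner_smul_right, Complex.conj_ofReal, hTx, hTw] at h1
  have hs : (1 - s) ^ 2 = 0 := by
    exact_mod_cast (by linear_combination h1 : ((1 - s : ℝ) : ℂ) ^ 2 = 0)
  obtain rfl : s = 1 := by linarith [pow_eq_zero_iff two_ne_zero |>.mp hs]
  simp [hw] at h0

theorem exists_inner_map_self_eq_ofReal (T : E →ₗ[ℂ] E) {x y : E} (hx : ‖x‖ = 1)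
    (hy : ‖y‖ = 1) (hTx : ⟪T x, x⟫_ℂ = 1) (hTy : ⟪T y, y⟫_ℂ = 0) {r : ℝ} (hr : r ∈ Icc 0 1) :
    ∃ z, ‖z‖ = 1 ∧ ⟪T z, z⟫_ℂ = r := by
  -- Rotating `y` to `w` makes the cross term real, so `⟪T z, z⟫` is real on the segment
  -- from `x` to `w`; the intermediate value theorem then applies to `⟪T z, z⟫ - r ‖z‖²`.
  obtain ⟨ω, hω, him⟩ := exists_norm_eq_one_im_mul_add_conj_mul_eq_zero ⟪T x, y⟫_ℂ ⟪T y, x⟫_ℂ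
  set w := ω • y
  have hw : ‖w‖ = 1 := by rw [norm_smul, hω, hy, one_mul]
  have hTw : ⟪T w, w⟫_ℂ = 0 := by simp [w, hTy]
  set c := (⟪T x, w⟫_ℂ + ⟪T w, x⟫_ℂ).re
  have hc : ⟪T x, w⟫_ℂ + ⟪T w, x⟫_ℂ = c := by
    have hcross : ⟪T x, w⟫_ℂ + ⟪T w, x⟫_ℂ = ω * ⟪T x, y⟫_ℂ + conj ω * ⟪T y, x⟫_ℂ := by
      simp only [w, map_smul, inner_smul_left, inner_smul_right]
    refine Complex.ext rfl ?_
    rw [Complex.ofReal_im, hcross, him]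
  set z : ℝ → E := fun s => ((1 - s : ℝ) : ℂ) • x + (s : ℂ) • w
  have hTz : ∀ s, ⟪T (z s), z s⟫_ℂ = ((1 - s) ^ 2 + (1 - s) * s * c : ℝ) := by
    intro s
    rw [inner_map_real_smul_add_real_smul_self, hTx, hTw, hc]
    push_cast
    ring
  have hcont : Continuous fun s => (1 - s) ^ 2 + (1 - s) * s * c - r * ‖z s‖ ^ 2 := by
    fun_prop
  obtain ⟨s, -, hs⟩ : ∃ s ∈ Icc (0 : ℝ) 1, (1 - s) ^ 2 + (1 - s) * s * c - r * ‖z s‖ ^ 2 = 0 :=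
    intermediate_value_Icc' zero_le_one hcont.continuousOn
      ⟨by simp [z, hw]; linarith [hr.1], by simp [z, hx]; linarith [hr.2]⟩
  have hz : z s ≠ 0 := one_sub_smul_add_smul_ne_zero_of_inner_map_self T hTx hTw
    (norm_ne_zero_iff.mp (hw ▸ one_ne_zero)) s
  have hzs : (‖z s‖ : ℂ) ^ 2 ≠ 0 := by exact_mod_cast pow_ne_zero 2 (norm_ne_zero_iff.mpr hz)
  refine ⟨normalize (z s), norm_normalize hz, mul_left_cancel₀ hzs ?_⟩
  rw [← inner_map_self_eq_norm_sq_mul_normalize, hTz,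
    show (1 - s) ^ 2 + (1 - s) * s * c = r * ‖z s‖ ^ 2 by linarith]
  push_cast
  ring

theorem convex_numericalRange (T : E →ₗ[ℂ] E) : Convex ℝ (numericalRange T) := by
  rintro _ ⟨x, hx, rfl⟩ _ ⟨y, hy, rfl⟩ α β hα hβ hαβ
  rw [mem_sphere_zero_iff_norm] at hx hy
  beta_reduce
  set a := ⟪T x, x⟫_ℂ
  set b := ⟪T y, y⟫_ℂ
  rcases eq_or_ne a b with hab | hab
  · exact ⟨x, mem_sphere_zero_iff_norm.2 hx, by rw [← hab, ← add_smul, hαβ, one_smul]⟩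
  -- `T' = (a - b)⁻¹ (T - b)` takes the values `1` at `x` and `0` at `y`.
  set T' : E →ₗ[ℂ] E := conj (a - b)⁻¹ • (T - conj b • LinearMap.id)
  have hT' : ∀ v, ‖v‖ = 1 → ⟪T' v, v⟫_ℂ = (a - b)⁻¹ * (⟪T v, v⟫_ℂ - b) := by
    intro v hv
    simp [T', inner_self_eq_norm_sq_to_K, hv, mul_comm]
  obtain ⟨z, hz, hTz⟩ := exists_inner_map_self_eq_ofReal T' hx hy
    (by rw [hT' x hx, inv_mul_cancel₀ (sub_ne_zero.2 hab)])
    (by rw [hT' y hy, sub_self, mul_zero])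
    ⟨hα, by linarith⟩
  refine ⟨z, mem_sphere_zero_iff_norm.2 hz, ?_⟩
  rw [hT' z hz, inv_mul_eq_iff_eq_mul₀ (sub_ne_zero.2 hab)] at hTz
  have hαβ' : (α : ℂ) + β = 1 := by exact_mod_cast hαβ
  rw [Complex.real_smul, Complex.real_smul]
  linear_combination hTz - b * hαβ'

theorem isCompact_numericalRange [FiniteDimensional ℂ E] (T : E →ₗ[ℂ] E) :
    IsCompact (numericalRange T) :=
  (isCompact_sphere 0 1).image (T.continuous_of_finiteDimensional.inner continuous_id)

theorem mem_numericalRange_compression_iff (K : Submodule ℂ E) [K.HasOrthogonalProjection]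
    (T : E →ₗ[ℂ] E) {z : ℂ} :
    z ∈ numericalRange (compression K T) ↔ ∃ x ∈ K, ‖x‖ = 1 ∧ ⟪T x, x⟫_ℂ = z := by
  constructor
  · rintro ⟨x, hx, rfl⟩
    exact ⟨x, x.2, by simpa using hx, (inner_compression_apply_self K T x).symm⟩
  · rintro ⟨x, hxK, hx, rfl⟩
    exact ⟨⟨x, hxK⟩, by simpa using hx, inner_compression_apply_self K T _⟩

theorem exists_mul_norm_sq_le_re_inner_smul_apply_self (K : Submodule ℂ E)
    [FiniteDimensional ℂ K] (S : E →L[ℂ] E) (h0 : 0 ∉ numericalRange (compression K S)) :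
    ∃ κ : ℂ, ∃ u : ℝ, 0 < u ∧ ∀ x ∈ K, u * ‖x‖ ^ 2 ≤ re ⟪(κ • S) x, x⟫_ℂ := by
  obtain ⟨f, u, hf0, hf⟩ := RCLike.geometric_hahn_banach_point_closed (𝕜 := ℂ)
    (convex_numericalRange _) (isCompact_numericalRange _).isClosed h0
  refine ⟨conj (f 1), u, by simpa using hf0, fun x hxK => ?_⟩
  rcases eq_or_ne x 0 with rfl | hx0
  · simp
  have hζ := hf _ ((mem_numericalRange_compression_iff K S).2
    ⟨normalize x, K.smul_of_tower_mem _ hxK, norm_normalize hx0, rfl⟩)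
  have hf1 : ∀ z, f z = f 1 * z := fun z => by
    rw [mul_comm, ← smul_eq_mul, ← map_smul, smul_eq_mul, mul_one]
  have hscale :
      ⟪(conj (f 1) • S) x, x⟫_ℂ = (‖x‖ ^ 2 : ℝ) * f ⟪S (normalize x), normalize x⟫_ℂ := by
    have hS := inner_map_self_eq_norm_sq_mul_normalize (S : E →ₗ[ℂ] E) x
    simp only [ContinuousLinearMap.coe_coe] at hS
    rw [smul_apply, inner_smul_left, Complex.conj_conj, hS, hf1 ⟪S (normalize x), normalize x⟫_ℂ]
    push_cast
    ring
  rw [hscale, RCLike.re_to_complex, Complex.re_ofReal_mul, mul_comm u]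
  exact mul_le_mul_of_nonneg_left hζ.le (sq_nonneg _)

end NumericalRange

theorem exists_inner_eq_zero_of_birkhoffOrthogonal_starProjection {E : Type*}
    [NormedAddCommGroup E] [InnerProductSpace ℂ E] (K : Submodule ℂ E) [FiniteDimensional ℂ K]
    (hK : K ≠ ⊥) (S : E →L[ℂ] E) (h : BirkhoffOrthogonal ℂ K.starProjection S) :
    ∃ x ∈ K, ‖x‖ = 1 ∧ ⟪S x, x⟫_ℂ = 0 := by
  by_contra h0
  obtain ⟨κ, u, hu, hcoercive⟩ := exists_mul_norm_sq_le_re_inner_smul_apply_self K S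
    (by simpa [mem_numericalRange_compression_iff] using h0)
  obtain ⟨t, ht⟩ := exists_norm_starProjection_sub_smul_lt_one K (κ • S) hu hcoercive
  have := h (-(t * κ))
  rw [neg_smul, ← sub_eq_add_neg, ← smul_smul, K.norm_starProjection hK] at this
  exact this.not_gt ht

/-- Let `H` be a finite-dimensional complex Hilbert space, `H₀ ≠ {0}` a subspace, `P` the
orthogonal projection onto `H₀` and `S ∈ B(H)`. Then `P` is Birkhoff–James orthogonal to `S`
iff there is a unit vector `ξ ∈ H₀` with `⟪Sξ, ξ⟫ = 0`. -/
theorem projection_birkhoff_orthogonal_iff_finiteDimensional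
    {H : Type*} [NormedAddCommGroup H] [InnerProductSpace ℂ H] [FiniteDimensional ℂ H]
    (H₀ : Submodule ℂ H) (hH₀ : H₀ ≠ ⊥) (P S : H →L[ℂ] H)
    (hP : ∀ ξ : H, P ξ ∈ H₀ ∧ ξ - P ξ ∈ H₀ᗮ) :
    (∀ lam : ℂ, ‖P‖ ≤ ‖P + lam • S‖) ↔
      ∃ ξ ∈ H₀, ‖ξ‖ = 1 ∧ (inner ℂ (S ξ) ξ : ℂ) = 0 := by
  obtain rfl : P = H₀.starProjection := ContinuousLinearMap.ext fun ξ =>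
    (H₀.eq_starProjection_of_mem_orthogonal (hP ξ).1 (hP ξ).2).symm
  exact ⟨exists_inner_eq_zero_of_birkhoffOrthogonal_starProjection H₀ hH₀ S,
    fun ⟨_, hξ, hξ1, hSξ⟩ => birkhoffOrthogonal_starProjection_of_inner_eq_zero H₀ S hξ hξ1 hSξ⟩
end

section
/- Let H be a nontrivial complex Hilbert space and T, S ∈ B(H). The following are equivalent: (i) T is Birkhoff–James orthogonal to S; (ii) ∥T + λS∥² ≥ ∥T∥² + |λ|²·m(S)² for every λ ∈ ℂ, where m(S) = inf{∥Sξ∥ : ξ ∈ H, ∥ξ∥ = 1} is the minimum modulus of S. -/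
/-!
If `‖T‖ ≤ ‖T + t • A‖` for all `t > 0`, pick for small `t` a unit vector `ξ` that nearly norms
`T + t • A`, up to an `o(t)` defect. With `x = T ξ` and `y = A ξ`, the identity
`t ‖x + y‖² + (1 - t) ‖x‖² = ‖x + t y‖² + t (1 - t) ‖y‖²` and `‖x‖ ≤ ‖T‖` turn this into
`‖T + A‖² ≥ ‖T‖² + (1 - t) ‖A ξ‖² - o(1)`. For `A = λ S` we have `‖A ξ‖ ≥ |λ| m(S)`, and `t → 0`
gives the Pythagorean inequality; the converse is immediate.
-/

open Filter Topology Set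

section

variable {𝕜 F : Type*} [RCLike 𝕜] [NormedAddCommGroup F] [InnerProductSpace 𝕜 F]

theorem norm_add_ofReal_smul_sq (x y : F) (t : ℝ) :
    ‖x + (t : 𝕜) • y‖ ^ 2 + t * (1 - t) * ‖y‖ ^ 2 = t * ‖x + y‖ ^ 2 + (1 - t) * ‖x‖ ^ 2 := by
  rw [norm_add_sq (𝕜 := 𝕜), norm_add_sq (𝕜 := 𝕜), inner_smul_right, RCLike.re_ofReal_mul,
    norm_smul, RCLike.norm_ofReal, mul_pow, sq_abs]
  ring

end

namespace ContinuousLinearMap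

variable {𝕜 E F : Type*} [RCLike 𝕜] [NormedAddCommGroup E] [NormedSpace 𝕜 E]
  [NormedAddCommGroup F]

noncomputable def minimumModulus [NormedSpace 𝕜 F] (S : E →L[𝕜] F) : ℝ :=
  ⨅ ξ : {ξ : E // ‖ξ‖ = 1}, ‖S ξ.1‖

theorem minimumModulus_nonneg [NormedSpace 𝕜 F] (S : E →L[𝕜] F) : 0 ≤ minimumModulus S :=
  Real.iInf_nonneg fun _ => norm_nonneg _

theorem minimumModulus_le_norm_apply [NormedSpace 𝕜 F] (S : E →L[𝕜] F) {ξ : E}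
    (hξ : ‖ξ‖ = 1) : minimumModulus S ≤ ‖S ξ‖ :=
  ciInf_le ⟨0, by rintro _ ⟨_, rfl⟩; exact norm_nonneg _⟩ (⟨ξ, hξ⟩ : {ξ : E // ‖ξ‖ = 1})

theorem exists_norm_eq_one_lt_norm_apply [Nontrivial E] [NormedSpace 𝕜 F] (f : E →L[𝕜] F)
    {r : ℝ} (hr : r < ‖f‖) : ∃ x : E, ‖x‖ = 1 ∧ r < ‖f x‖ := by
  rcases lt_or_ge r 0 with hr₀ | hr₀
  · obtain ⟨x, hx⟩ := exists_ne (0 : E)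
    exact ⟨_, norm_smul_inv_norm (𝕜 := 𝕜) hx, hr₀.trans_le (norm_nonneg _)⟩
  · lift r to NNReal using hr₀
    obtain ⟨x, hx, hrx⟩ := f.exists_nnnorm_eq_one_lt_apply_of_lt_opNNNorm (r := r) hr
    exact ⟨x, congrArg NNReal.toReal hx, hrx⟩

variable [InnerProductSpace 𝕜 F]

theorem le_sq_norm_add_of_le_sq_norm_apply_add_smul {T A : E →L[𝕜] F} {t ε : ℝ} {ξ : E}
    (ht₀ : 0 < t) (ht₁ : t ≤ 1) (hξ : ‖ξ‖ ≤ 1)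
    (h : ‖T‖ ^ 2 - t * ε ≤ ‖(T + (t : 𝕜) • A) ξ‖ ^ 2) :
    ‖T‖ ^ 2 - ε + (1 - t) * ‖A ξ‖ ^ 2 ≤ ‖T + A‖ ^ 2 := by
  have hid := norm_add_ofReal_smul_sq (𝕜 := 𝕜) (T ξ) (A ξ) t
  have hT : ‖T ξ‖ ^ 2 ≤ ‖T‖ ^ 2 := by gcongr; exact T.unit_le_opNorm ξ hξ
  have hTA : ‖(T + A) ξ‖ ^ 2 ≤ ‖T + A‖ ^ 2 := by gcongr; exact (T + A).unit_le_opNorm ξ hξ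
  rw [add_apply, smul_apply] at h
  rw [add_apply] at hTA
  refine le_of_mul_le_mul_left ?_ ht₀
  linarith [mul_le_mul_of_nonneg_left hT (sub_nonneg.2 ht₁),
    mul_le_mul_of_nonneg_left hTA ht₀.le]

theorem sq_norm_add_sq_le_sq_norm_add [Nontrivial E] {T A : E →L[𝕜] F} {c : ℝ}
    (hT : ∀ t : ℝ, 0 < t → ‖T‖ ≤ ‖T + (t : 𝕜) • A‖) (hc₀ : 0 ≤ c)
    (hc : ∀ ξ : E, ‖ξ‖ = 1 → c ≤ ‖A ξ‖) :
    ‖T‖ ^ 2 + c ^ 2 ≤ ‖T + A‖ ^ 2 := by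
  have key : ∀ t ∈ Ioo (0 : ℝ) 1, ‖T‖ ^ 2 - 2 * t * ‖T‖ + (1 - t) * c ^ 2 ≤ ‖T + A‖ ^ 2 := by
    rintro t ⟨ht₀, ht₁⟩
    obtain ⟨ξ, hξ, hlt⟩ := (T + (t : 𝕜) • A).exists_norm_eq_one_lt_norm_apply
      ((sub_lt_self _ (pow_pos ht₀ 2)).trans_le (hT t ht₀))
    have hsq : ‖T‖ ^ 2 - t * (2 * t * ‖T‖) ≤ ‖(T + (t : 𝕜) • A) ξ‖ ^ 2 := by
      rcases le_or_gt ‖T‖ (t ^ 2) with hTt | hTt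
      · nlinarith [norm_nonneg T, norm_nonneg ((T + (t : 𝕜) • A) ξ)]
      · nlinarith [pow_lt_pow_left₀ hlt (sub_pos.2 hTt).le two_ne_zero]
    have hcξ : c ^ 2 ≤ ‖A ξ‖ ^ 2 := by gcongr; exact hc ξ hξ
    nlinarith [le_sq_norm_add_of_le_sq_norm_apply_add_smul ht₀ ht₁.le hξ.le hsq]
  have hlim : Tendsto (fun t : ℝ => ‖T‖ ^ 2 - 2 * t * ‖T‖ + (1 - t) * c ^ 2) (𝓝[>] 0)
      (𝓝 (‖T‖ ^ 2 + c ^ 2)) := by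
    refine (Continuous.tendsto' ?_ 0 _ (by ring)).mono_left nhdsWithin_le_nhds
    fun_prop
  exact le_of_tendsto hlim (eventually_of_mem (Ioo_mem_nhdsGT one_pos) key)

end ContinuousLinearMap

open ContinuousLinearMap in
theorem birkhoff_orthogonal_iff_pythagorean_minimum_modulus_general
    {H : Type*} [NormedAddCommGroup H] [InnerProductSpace ℂ H] [Nontrivial H]
    (T S : H →L[ℂ] H) (m : ℝ) (hm : m = ⨅ ξ : {ξ : H // ‖ξ‖ = 1}, ‖S ξ.1‖) :
    (∀ lam : ℂ, ‖T‖ ≤ ‖T + lam • S‖) ↔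
      ∀ lam : ℂ, ‖T‖ ^ 2 + ‖lam‖ ^ 2 * m ^ 2 ≤ ‖T + lam • S‖ ^ 2 := by
  obtain rfl : m = minimumModulus S := hm
  refine ⟨fun h lam => ?_, fun h lam => ?_⟩
  · have hray (t : ℝ) (_ : 0 < t) : ‖T‖ ≤ ‖T + (t : ℂ) • lam • S‖ := by
      rw [smul_smul]
      exact h _
    have hbelow (ξ : H) (hξ : ‖ξ‖ = 1) : ‖lam‖ * minimumModulus S ≤ ‖(lam • S) ξ‖ := by
      rw [smul_apply, norm_smul]
      exact mul_le_mul_of_nonneg_left (minimumModulus_le_norm_apply S hξ) (norm_nonneg lam)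
    have := sq_norm_add_sq_le_sq_norm_add hray
      (mul_nonneg (norm_nonneg lam) (minimumModulus_nonneg S)) hbelow
    rwa [mul_pow] at this
  · refine le_of_pow_le_pow_left₀ two_ne_zero (norm_nonneg _) ?_
    exact (le_add_of_nonneg_right (by positivity)).trans (h lam)

/-- For operators `T, S` on a nontrivial complex Hilbert space `H`, `T` is Birkhoff–James
orthogonal to `S` iff `‖T + λS‖² ≥ ‖T‖² + |λ|² m(S)²` for all `λ ∈ ℂ`, where
`m(S) = inf {‖Sξ‖ : ‖ξ‖ = 1}` is the minimum modulus of `S`. -/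
theorem birkhoff_orthogonal_iff_pythagorean_minimum_modulus
    {H : Type*} [NormedAddCommGroup H] [InnerProductSpace ℂ H] [CompleteSpace H] [Nontrivial H]
    (T S : H →L[ℂ] H) (m : ℝ) (hm : m = ⨅ ξ : {ξ : H // ‖ξ‖ = 1}, ‖S ξ.1‖) :
    (∀ lam : ℂ, ‖T‖ ≤ ‖T + lam • S‖) ↔
      ∀ lam : ℂ, ‖T‖ ^ 2 + ‖lam‖ ^ 2 * m ^ 2 ≤ ‖T + lam • S‖ ^ 2 :=
  birkhoff_orthogonal_iff_pythagorean_minimum_modulus_general T S m hm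
end

section
/- Let H be an infinite-dimensional complex Hilbert space and T ∈ B(H). Suppose H₀ is a finite-dimensional nonzero subspace of H such that the norm-attaining set M_T = {ξ ∈ H : ∥ξ∥ = 1, ∥Tξ∥ = ∥T∥} equals the unit sphere of H₀, and sup{∥Tξ∥ : ξ ∈ H₀⊥, ∥ξ∥ = 1} < ∥T∥. Then for every S ∈ B(H) the following are equivalent: (i) T is strongly Birkhoff–James orthogonal to S (i.e. ∥T + S∘A∥ ≥ ∥T∥ for every A ∈ B(H)); (ii) there exists a unit vector ξ ∈ H₀ with ∥Tξ∥ = ∥T∥ and S*Tξ = 0; (iii) there exists a unit vector ξ ∈ H₀ with |T|ξ = ∥T∥ξ and S*Tξ = 0. -/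
/-!
If a norm-attaining unit vector `ξ` has `S* T ξ = 0`, then `T ξ ⊥ S A ξ` for every `A`, and
Pythagoras gives `‖(T + S A) ξ‖ ≥ ‖T ξ‖ = ‖T‖`.

Conversely, suppose `S* T` vanishes nowhere on the unit sphere of `H₀`; as `H₀` is
finite-dimensional, `‖S* T u‖ ≥ c ‖u‖` on `H₀` for some `c > 0`. Vectors attaining the norm of
`T` are eigenvectors of `T* T` for `‖T‖²`, so `T H₀ ⊥ T H₀ᗮ`. For `A = -t S* T P_{H₀}` and
`x = u + v` with `u ∈ H₀`, `v ∈ H₀ᗮ`, the `u`-part of `‖(T + S A) x‖²` loses `2 t c² ‖u‖²` at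
first order in `t`, the `v`-part stays below `k² ‖v‖²` with `k < ‖T‖`, and the cross term is
absorbed by AM-GM. Hence `‖T + S A‖ < ‖T‖` for small `t > 0`.

Finally `|T| ξ = ‖T‖ ξ` iff `T* T ξ = ‖T‖² ξ`, because `|T|` is positive.
-/

open ContinuousLinearMap
open scoped InnerProductSpace

section Normed

variable {𝕜 E F : Type*} [RCLike 𝕜] [NormedAddCommGroup E] [NormedSpace 𝕜 E]
  [NormedAddCommGroup F] [NormedSpace 𝕜 F]

lemma norm_apply_eq_mul_norm_of_forall_norm_eq_one {f : E →L[𝕜] F} {K : Submodule 𝕜 E}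
    {C : ℝ} (h : ∀ ξ ∈ K, ‖ξ‖ = 1 → ‖f ξ‖ = C) {u : E} (hu : u ∈ K) :
    ‖f u‖ = C * ‖u‖ := by
  rcases eq_or_ne u 0 with rfl | hu0
  · simp
  have := h _ (K.smul_mem _ hu) (norm_smul_inv_norm hu0)
  rwa [map_smul, norm_smul, norm_inv, RCLike.norm_ofReal, abs_norm, inv_mul_eq_div,
    div_eq_iff (norm_ne_zero_iff.mpr hu0)] at this

lemma exists_pos_mul_norm_le_of_forall_norm_eq_one {f : E →L[𝕜] F} {K : Submodule 𝕜 E}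
    [FiniteDimensional 𝕜 K] (hf : ∀ ξ ∈ K, ‖ξ‖ = 1 → f ξ ≠ 0) :
    ∃ c > 0, ∀ u ∈ K, c * ‖u‖ ≤ ‖f u‖ := by
  have hker : LinearMap.ker (f.toLinearMap ∘ₗ K.subtype) = ⊥ := by
    refine LinearMap.ker_eq_bot'.mpr fun u hu => ?_
    by_contra hu0
    have hu0' : (u : E) ≠ 0 := by simpa using hu0
    refine hf _ (K.smul_mem _ u.2) (norm_smul_inv_norm hu0') ?_
    rw [map_smul, show f u = 0 from hu, smul_zero]
  obtain ⟨C, hC, hanti⟩ := (f.toLinearMap ∘ₗ K.subtype).exists_antilipschitzWith hker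
  refine ⟨(C : ℝ)⁻¹, by positivity, fun u hu => ?_⟩
  rw [inv_mul_le_iff₀ (by positivity)]
  exact hanti.le_mul_norm (map_zero _) ⟨u, hu⟩

lemma opNorm_le_sqrt_of_norm_apply_sq_le {f : E →L[𝕜] F} {C : ℝ}
    (h : ∀ x, ‖f x‖ ^ 2 ≤ C * ‖x‖ ^ 2) : ‖f‖ ≤ √C :=
  opNorm_le_bound _ (Real.sqrt_nonneg C) fun x => by
    rw [← Real.sqrt_sq (norm_nonneg (f x)), ← Real.sqrt_sq (norm_nonneg x),
      ← Real.sqrt_mul' C (sq_nonneg _)]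
    exact Real.sqrt_le_sqrt (h x)

end Normed

lemma exists_pos_quadratic_form_le {N c M k : ℝ} (hc : 0 < c) (hk : 0 ≤ k) (hkN : k < N) :
    ∃ t > 0, ∃ m > 0, ∀ a b : ℝ,
      (N ^ 2 - 2 * t * c ^ 2 + t ^ 2 * M ^ 2) * a ^ 2 + 2 * t * M * N * (a * b) + k ^ 2 * b ^ 2
        ≤ (N ^ 2 - m) * (a ^ 2 + b ^ 2) := by
  set δ := N ^ 2 - k ^ 2
  have hN : 0 < N := hk.trans_lt hkN
  have hδ : 0 < δ := by nlinarith
  -- `t` is chosen so that `t M² ≤ c² / 2` and `t M² N² ≤ c² δ / 2`.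
  set t := c ^ 2 * δ / (2 * (M ^ 2 + 1) * N ^ 2)
  have ht : 0 < t := by positivity
  have hdef : t * (2 * (M ^ 2 + 1) * N ^ 2) = c ^ 2 * δ := div_mul_cancel₀ _ (by positivity)
  have htM : t * M ^ 2 ≤ c ^ 2 / 2 := by nlinarith [sq_nonneg k, sq_nonneg N]
  have htMN : t * M ^ 2 * N ^ 2 ≤ c ^ 2 * (δ / 2) := by nlinarith
  refine ⟨t, ht, min (t * c ^ 2 / 2) (δ / 2), by positivity, fun a b => ?_⟩
  have hm₁ := min_le_left (t * c ^ 2 / 2) (δ / 2)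
  have hm₂ := min_le_right (t * c ^ 2 / 2) (δ / 2)
  have amgm : c ^ 2 * (2 * t * M * N * (a * b))
      ≤ c ^ 2 * (t * c ^ 2 * a ^ 2) + t * M ^ 2 * N ^ 2 * b ^ 2 := by
    nlinarith [mul_nonneg ht.le (sq_nonneg (c ^ 2 * a - M * N * b))]
  have hbδ : t * M ^ 2 * N ^ 2 * b ^ 2 ≤ c ^ 2 * (δ / 2 * b ^ 2) := by
    nlinarith [mul_le_mul_of_nonneg_right htMN (sq_nonneg b)]
  have hcross : 2 * t * M * N * (a * b) ≤ t * c ^ 2 * a ^ 2 + δ / 2 * b ^ 2 :=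
    le_of_mul_le_mul_left (by nlinarith) (pow_pos hc 2)
  nlinarith [mul_le_mul_of_nonneg_right htM (mul_nonneg ht.le (sq_nonneg a)),
    mul_le_mul_of_nonneg_right hm₁ (sq_nonneg a), mul_le_mul_of_nonneg_right hm₂ (sq_nonneg b)]

section InnerProduct

variable {𝕜 E : Type*} [RCLike 𝕜] [NormedAddCommGroup E] [InnerProductSpace 𝕜 E] [CompleteSpace E]

lemma adjoint_apply_apply_eq_of_norm_apply_eq {T : E →L[𝕜] E} {u : E}
    (h : ‖T u‖ = ‖T‖ * ‖u‖) : adjoint T (T u) = ((‖T‖ ^ 2 : ℝ) : 𝕜) • u := by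
  have hbound : ‖adjoint T (T u)‖ ≤ ‖T‖ ^ 2 * ‖u‖ := by
    calc ‖adjoint T (T u)‖ ≤ ‖adjoint T‖ * ‖T u‖ := le_opNorm _ _
      _ = ‖T‖ ^ 2 * ‖u‖ := by rw [LinearIsometryEquiv.norm_map, h]; ring
  have hinner :
      RCLike.re ⟪adjoint T (T u), ((‖T‖ ^ 2 : ℝ) : 𝕜) • u⟫_𝕜 = ‖T‖ ^ 4 * ‖u‖ ^ 2 := by
    rw [inner_smul_right, adjoint_inner_left, inner_self_eq_norm_sq_to_K, h,
      RCLike.re_ofReal_mul]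
    norm_cast
    ring
  have hsq : ‖adjoint T (T u) - ((‖T‖ ^ 2 : ℝ) : 𝕜) • u‖ ^ 2 ≤ 0 := by
    rw [@norm_sub_sq 𝕜, hinner, norm_smul, RCLike.norm_ofReal, abs_of_nonneg (by positivity)]
    nlinarith [norm_nonneg (adjoint T (T u))]
  rw [← sub_eq_zero, ← norm_eq_zero]
  exact pow_eq_zero_iff two_ne_zero |>.mp (hsq.antisymm (sq_nonneg _))

lemma inner_apply_apply_eq_zero_of_norm_apply_eq {T : E →L[𝕜] E} {u v : E}
    (h : ‖T u‖ = ‖T‖ * ‖u‖) (huv : ⟪u, v⟫_𝕜 = 0) : ⟪T u, T v⟫_𝕜 = 0 := by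
  rw [← adjoint_inner_left, adjoint_apply_apply_eq_of_norm_apply_eq h, inner_smul_left, huv,
    mul_zero]

lemma norm_le_norm_add_comp_of_adjoint_apply_eq_zero {T S : E →L[𝕜] E} {ξ : E} (hξ : ‖ξ‖ = 1)
    (hTξ : ‖T ξ‖ = ‖T‖) (hST : adjoint S (T ξ) = 0) (A : E →L[𝕜] E) :
    ‖T‖ ≤ ‖T + S ∘L A‖ := by
  have horth : ⟪T ξ, S (A ξ)⟫_𝕜 = 0 := by rw [← adjoint_inner_left, hST, inner_zero_left]
  have hpyth : ‖T ξ‖ ^ 2 ≤ ‖(T + S ∘L A) ξ‖ ^ 2 := by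
    rw [add_apply, comp_apply, @norm_add_sq 𝕜, horth, map_zero, mul_zero, add_zero]
    exact le_add_of_nonneg_right (sq_nonneg _)
  calc ‖T‖ = ‖T ξ‖ := hTξ.symm
    _ ≤ ‖(T + S ∘L A) ξ‖ :=
      (pow_le_pow_iff_left₀ (norm_nonneg _) (norm_nonneg _) two_ne_zero).mp hpyth
    _ ≤ ‖T + S ∘L A‖ := by simpa [hξ] using le_opNorm (T + S ∘L A) ξ

lemma norm_apply_sub_smul_sq (T S : E →L[𝕜] E) (t : ℝ) (u : E) :
    ‖T u - (t : 𝕜) • S (adjoint S (T u))‖ ^ 2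
      = ‖T u‖ ^ 2 - 2 * t * ‖adjoint S (T u)‖ ^ 2 + t ^ 2 * ‖S (adjoint S (T u))‖ ^ 2 := by
  rw [@norm_sub_sq 𝕜, inner_smul_right, ← adjoint_inner_left, inner_self_eq_norm_sq_to_K,
    norm_smul, RCLike.norm_ofReal, mul_pow, sq_abs]
  norm_cast
  ring

lemma norm_apply_sub_smul_add_apply_sq_le {T S : E →L[𝕜] E} {u v : E} {c M k t : ℝ}
    (ht : 0 ≤ t) (hc : 0 ≤ c) (hTu : ‖T u‖ = ‖T‖ * ‖u‖) (huv : ⟪u, v⟫_𝕜 = 0)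
    (hcu : c * ‖u‖ ≤ ‖adjoint S (T u)‖) (hMu : ‖S (adjoint S (T u))‖ ≤ M * ‖u‖)
    (hkv : ‖T v‖ ≤ k * ‖v‖) :
    ‖T u - (t : 𝕜) • S (adjoint S (T u)) + T v‖ ^ 2
      ≤ (‖T‖ ^ 2 - 2 * t * c ^ 2 + t ^ 2 * M ^ 2) * ‖u‖ ^ 2
        + 2 * t * M * ‖T‖ * (‖u‖ * ‖v‖) + k ^ 2 * ‖v‖ ^ 2 := by
  have hcross : RCLike.re ⟪T u - (t : 𝕜) • S (adjoint S (T u)), T v⟫_𝕜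
      ≤ t * M * ‖T‖ * (‖u‖ * ‖v‖) := by
    rw [inner_sub_left, inner_apply_apply_eq_zero_of_norm_apply_eq hTu huv, zero_sub,
      ← inner_neg_left]
    refine (re_inner_le_norm _ _).trans ?_
    rw [norm_neg, norm_smul, RCLike.norm_ofReal, abs_of_nonneg ht]
    calc t * ‖S (adjoint S (T u))‖ * ‖T v‖ ≤ t * (M * ‖u‖) * (‖T‖ * ‖v‖) := by
          have := (norm_nonneg _).trans hMu
          gcongr
          exact le_opNorm T v
      _ = t * M * ‖T‖ * (‖u‖ * ‖v‖) := by ring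
  have hRu : (c * ‖u‖) ^ 2 ≤ ‖adjoint S (T u)‖ ^ 2 := by gcongr
  have hSRu : ‖S (adjoint S (T u))‖ ^ 2 ≤ (M * ‖u‖) ^ 2 := by gcongr
  have hTv : ‖T v‖ ^ 2 ≤ (k * ‖v‖) ^ 2 := by gcongr
  rw [@norm_add_sq 𝕜, norm_apply_sub_smul_sq, hTu]
  nlinarith [mul_le_mul_of_nonneg_left hRu ht, mul_le_mul_of_nonneg_left hSRu (sq_nonneg t)]

lemma exists_norm_add_comp_lt {T S : E →L[𝕜] E} {K : Submodule 𝕜 E} [FiniteDimensional 𝕜 K]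
    {k : ℝ} (hk : 0 ≤ k) (hkT : k < ‖T‖) (hTK : ∀ u ∈ K, ‖T u‖ = ‖T‖ * ‖u‖)
    (hTKperp : ∀ v ∈ Kᗮ, ‖T v‖ ≤ k * ‖v‖) (hS : ∀ ξ ∈ K, ‖ξ‖ = 1 → adjoint S (T ξ) ≠ 0) :
    ∃ A : E →L[𝕜] E, ‖T + S ∘L A‖ < ‖T‖ := by
  obtain ⟨c, hc, hcK⟩ := exists_pos_mul_norm_le_of_forall_norm_eq_one (f := adjoint S ∘L T) hS
  set M := ‖S ∘L adjoint S ∘L T‖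
  obtain ⟨t, ht, m, hm, hquad⟩ := exists_pos_quadratic_form_le (M := M) hc hk hkT
  set A := -((t : 𝕜) • (adjoint S ∘L T ∘L K.starProjection))
  have hsq : ∀ x, ‖(T + S ∘L A) x‖ ^ 2 ≤ (‖T‖ ^ 2 - m) * ‖x‖ ^ 2 := by
    intro x
    set u := K.starProjection x
    have hu : u ∈ K := K.starProjection_apply_mem x
    have hv : x - u ∈ Kᗮ := K.sub_starProjection_mem_orthogonal x
    have huv : ⟪u, x - u⟫_𝕜 = 0 := K.inner_right_of_mem_orthogonal hu hv
    have hx : (T + S ∘L A) x = T u - (t : 𝕜) • S (adjoint S (T u)) + T (x - u) := by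
      simp only [A, add_apply, comp_apply, neg_apply, smul_apply, map_neg, map_smul, map_sub]
      abel
    have hx2 : ‖x‖ ^ 2 = ‖u‖ ^ 2 + ‖x - u‖ ^ 2 := by
      rw [← add_sub_cancel u x, @norm_add_sq 𝕜, huv]
      simp
    rw [hx, hx2]
    refine (norm_apply_sub_smul_add_apply_sq_le ht.le hc.le (hTK u hu) huv (hcK u hu)
      ?_ (hTKperp _ hv)).trans (hquad _ _)
    exact le_opNorm (S ∘L adjoint S ∘L T) u
  refine ⟨A, (opNorm_le_sqrt_of_norm_apply_sq_le hsq).trans_lt ?_⟩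
  exact (Real.sqrt_lt' (hk.trans_lt hkT)).mpr (by linarith)

end InnerProduct

lemma ContinuousLinearMap.IsPositive.apply_eq_smul_of_apply_apply_eq {𝕜 E : Type*} [RCLike 𝕜]
    [NormedAddCommGroup E] [InnerProductSpace 𝕜 E] {b : E →L[𝕜] E}
    (hb : b.IsPositive) {r : ℝ} (hr : 0 < r) {ξ : E} (h : b (b ξ) = ((r ^ 2 : ℝ) : 𝕜) • ξ) :
    b ξ = (r : 𝕜) • ξ := by
  set w := b ξ - (r : 𝕜) • ξ
  -- `(b + r)(b - r) ξ = 0`, so `w` is an eigenvector of the positive `b` for `-r < 0`.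
  have hbw : b w = -((r : 𝕜) • w) := by
    rw [map_sub, map_smul, h, smul_sub, smul_smul, ← RCLike.ofReal_mul, ← pow_two]
    abel
  have hw : r * ‖w‖ ^ 2 ≤ 0 := by
    have := hb.re_inner_nonneg_left w
    rwa [hbw, inner_neg_left, inner_smul_left, inner_self_eq_norm_sq_to_K, RCLike.conj_ofReal,
      map_neg, ← RCLike.ofReal_pow, RCLike.re_ofReal_mul, RCLike.ofReal_re, neg_nonneg] at this
  have : ‖w‖ ^ 2 = 0 := (nonpos_of_mul_nonpos_right hw hr).antisymm (sq_nonneg _)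
  exact sub_eq_zero.mp (norm_eq_zero.mp (pow_eq_zero_iff two_ne_zero |>.mp this))

section Absolute

variable {H : Type*} [NormedAddCommGroup H] [InnerProductSpace ℂ H] [CompleteSpace H]

lemma sqrt_star_mul_self_apply_apply (T : H →L[ℂ] H) (x : H) :
    CFC.sqrt (star T * T) (CFC.sqrt (star T * T) x) = adjoint T (T x) := by
  rw [← mul_apply_eq_comp, CFC.sqrt_mul_sqrt_self _ (star_mul_self_nonneg T),
    mul_apply_eq_comp, star_eq_adjoint]

lemma norm_sqrt_star_mul_self_apply (T : H →L[ℂ] H) (x : H) :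
    ‖CFC.sqrt (star T * T) x‖ = ‖T x‖ := by
  have hb := (CFC.sqrt_nonneg (star T * T)).isSelfAdjoint
  rw [← sq_eq_sq₀ (norm_nonneg _) (norm_nonneg _), ← inner_self_eq_norm_sq (𝕜 := ℂ),
    ← inner_self_eq_norm_sq (𝕜 := ℂ), ← adjoint_inner_left, IsSelfAdjoint.adjoint_eq hb,
    sqrt_star_mul_self_apply_apply, adjoint_inner_left]

lemma sqrt_star_mul_self_apply_eq_norm_smul_iff {T : H →L[ℂ] H} (hT : 0 < ‖T‖) {ξ : H} :
    CFC.sqrt (star T * T) ξ = ‖T‖ • ξ ↔ ‖T ξ‖ = ‖T‖ * ‖ξ‖ := by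
  rw [RCLike.real_smul_eq_coe_smul (K := ℂ)]
  constructor
  · intro h
    rw [← norm_sqrt_star_mul_self_apply, h, norm_smul, RCLike.norm_ofReal, abs_norm]
  · intro h
    have hb : (CFC.sqrt (star T * T)).IsPositive :=
      (nonneg_iff_isPositive _).mp (CFC.sqrt_nonneg _)
    refine hb.apply_eq_smul_of_apply_apply_eq hT ?_
    rw [sqrt_star_mul_self_apply_apply, adjoint_apply_apply_eq_of_norm_apply_eq h]

end Absolute

theorem strong_birkhoff_orthogonal_iff_of_normAttainingSet_sphere_general
    {H : Type*} [NormedAddCommGroup H] [InnerProductSpace ℂ H] [CompleteSpace H]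
    (T : H →L[ℂ] H)
    (H₀ : Submodule ℂ H) [FiniteDimensional ℂ H₀]
    (hM : {ξ : H | ‖ξ‖ = 1 ∧ ‖T ξ‖ = ‖T‖} = {ξ : H | ξ ∈ H₀ ∧ ‖ξ‖ = 1})
    (hsup : (⨆ ξ : {ξ : H // ξ ∈ H₀ᗮ ∧ ‖ξ‖ = 1}, ‖T ξ.1‖) < ‖T‖)
    (S : H →L[ℂ] H) :
    ((∀ A : H →L[ℂ] H, ‖T‖ ≤ ‖T + S ∘L A‖) ↔
        ∃ ξ ∈ H₀, ‖ξ‖ = 1 ∧ ‖T ξ‖ = ‖T‖ ∧ ContinuousLinearMap.adjoint S (T ξ) = 0) ∧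
    ((∀ A : H →L[ℂ] H, ‖T‖ ≤ ‖T + S ∘L A‖) ↔
        ∃ ξ ∈ H₀, ‖ξ‖ = 1 ∧ CFC.sqrt (star T * T) ξ = ‖T‖ • ξ ∧
          ContinuousLinearMap.adjoint S (T ξ) = 0) := by
  set k := ⨆ ξ : {ξ : H // ξ ∈ H₀ᗮ ∧ ‖ξ‖ = 1}, ‖T ξ.1‖
  have hk : 0 ≤ k := Real.iSup_nonneg fun _ => norm_nonneg _
  have hTH₀ : ∀ ξ ∈ H₀, ‖ξ‖ = 1 → ‖T ξ‖ = ‖T‖ := fun ξ hξ h1 => (hM.ge ⟨hξ, h1⟩).2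
  have hTH₀perp : ∀ v ∈ H₀ᗮ, ‖T v‖ ≤ k * ‖v‖ := by
    have hbdd : BddAbove (Set.range fun ξ : {ξ : H // ξ ∈ H₀ᗮ ∧ ‖ξ‖ = 1} => ‖T ξ.1‖) :=
      ⟨‖T‖, by rintro _ ⟨ξ, rfl⟩; simpa [ξ.2.2] using le_opNorm T ξ.1⟩
    have hres : ‖T ∘L H₀ᗮ.subtypeL‖ ≤ k :=
      opNorm_le_of_unit_norm hk fun ξ hξ => le_ciSup hbdd ⟨ξ, ξ.2, hξ⟩
    exact fun v hv => (le_opNorm _ (⟨v, hv⟩ : H₀ᗮ)).trans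
      (mul_le_mul_of_nonneg_right hres (norm_nonneg v))
  have hiff : (∀ A : H →L[ℂ] H, ‖T‖ ≤ ‖T + S ∘L A‖) ↔
      ∃ ξ ∈ H₀, ‖ξ‖ = 1 ∧ ‖T ξ‖ = ‖T‖ ∧ adjoint S (T ξ) = 0 := by
    refine ⟨fun h => ?_, fun ⟨ξ, _, h1, h2, h3⟩ =>
      norm_le_norm_add_comp_of_adjoint_apply_eq_zero h1 h2 h3⟩
    by_contra! hS
    obtain ⟨A, hA⟩ := exists_norm_add_comp_lt hk hsup
      (fun u hu => norm_apply_eq_mul_norm_of_forall_norm_eq_one hTH₀ hu) hTH₀perp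
      fun ξ hξ h1 => hS ξ hξ h1 (hTH₀ ξ hξ h1)
    exact (h A).not_gt hA
  refine ⟨hiff, hiff.trans <| exists_congr fun ξ =>
    and_congr_right fun _ => and_congr_right fun h1 => ?_⟩
  rw [sqrt_star_mul_self_apply_eq_norm_smul_iff (hk.trans_lt hsup), h1, mul_one]

/-- Let `H` be infinite dimensional, `T ∈ B(H)`, and suppose the norm-attaining set `M_T`
is the unit sphere of a finite-dimensional nonzero subspace `H₀` with
`‖T‖_{H₀ᗮ} < ‖T‖`. Then for every `S ∈ B(H)`: `T ⊥^s_B S` iff there is a unit vector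
`ξ ∈ H₀` with `‖Tξ‖ = ‖T‖` and `S*Tξ = 0`, iff there is a unit vector `ξ ∈ H₀` with
`|T|ξ = ‖T‖ξ` and `S*Tξ = 0`. -/
theorem strong_birkhoff_orthogonal_iff_of_normAttainingSet_sphere
    {H : Type*} [NormedAddCommGroup H] [InnerProductSpace ℂ H] [CompleteSpace H]
    (hinf : ¬ FiniteDimensional ℂ H) (T : H →L[ℂ] H)
    (H₀ : Submodule ℂ H) (hH₀ : H₀ ≠ ⊥) [FiniteDimensional ℂ H₀]
    (hM : {ξ : H | ‖ξ‖ = 1 ∧ ‖T ξ‖ = ‖T‖} = {ξ : H | ξ ∈ H₀ ∧ ‖ξ‖ = 1})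
    (hsup : (⨆ ξ : {ξ : H // ξ ∈ H₀ᗮ ∧ ‖ξ‖ = 1}, ‖T ξ.1‖) < ‖T‖)
    (S : H →L[ℂ] H) :
    ((∀ A : H →L[ℂ] H, ‖T‖ ≤ ‖T + S ∘L A‖) ↔
        ∃ ξ ∈ H₀, ‖ξ‖ = 1 ∧ ‖T ξ‖ = ‖T‖ ∧ ContinuousLinearMap.adjoint S (T ξ) = 0) ∧
    ((∀ A : H →L[ℂ] H, ‖T‖ ≤ ‖T + S ∘L A‖) ↔
        ∃ ξ ∈ H₀, ‖ξ‖ = 1 ∧ CFC.sqrt (star T * T) ξ = ‖T‖ • ξ ∧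
          ContinuousLinearMap.adjoint S (T ξ) = 0) :=
  strong_birkhoff_orthogonal_iff_of_normAttainingSet_sphere_general T H₀ hM hsup S
end

section
/- Let H be an infinite-dimensional complex Hilbert space and T ∈ B(H). Suppose H₀ is a finite-dimensional nonzero subspace of H such that the norm-attaining set M_T = {ξ ∈ H : ∥ξ∥ = 1, ∥Tξ∥ = ∥T∥} equals the unit sphere of H₀, and sup{∥Tξ∥ : ξ ∈ H₀⊥, ∥ξ∥ = 1} < ∥T∥. Then there exists a unit vector ξ ∈ H₀ such that |T|ξ = ∥T∥ξ and ∥T∥²·(T*T)ξ = (T*T)²ξ. -/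
/-!
Every unit vector `ξ ∈ H₀` lies in `M_T`. A vector at which `T` attains its norm is an
eigenvector of `T*T` for the eigenvalue `‖T‖²`: expanding `‖T*Tξ - ‖T‖²ξ‖²` and using
`‖T*Tξ‖ ≤ ‖T‖²` and `⟪T*Tξ, ξ⟫ = ‖Tξ‖² = ‖T‖²` shows it is `≤ 0`. A positive square root
`A` of `T*T` then satisfies `Aξ = ‖T‖ξ`, because `(A + ‖T‖)(A - ‖T‖)ξ = 0` and `A + c` is
injective for `c > 0`; when `‖T‖ = 0`, `‖Aξ‖² = ⟪A²ξ, ξ⟫ = 0`.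
-/

open ContinuousLinearMap RCLike

namespace ContinuousLinearMap

variable {𝕜 E F : Type*} [RCLike 𝕜] [NormedAddCommGroup E] [InnerProductSpace 𝕜 E]
  [NormedAddCommGroup F] [InnerProductSpace 𝕜 F]

theorem adjoint_apply_apply_eq_smul_of_norm_apply_eq [CompleteSpace E] [CompleteSpace F]
    (T : E →L[𝕜] F) {x : E} (hx : ‖T x‖ = ‖T‖ * ‖x‖) :
    adjoint T (T x) = ((‖T‖ ^ 2 : ℝ) : 𝕜) • x := by
  have hnorm : ‖adjoint T (T x)‖ ≤ ‖T‖ ^ 2 * ‖x‖ :=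
    calc ‖adjoint T (T x)‖ ≤ ‖adjoint T‖ * ‖T x‖ := (adjoint T).le_opNorm _
      _ = ‖T‖ ^ 2 * ‖x‖ := by rw [LinearIsometryEquiv.norm_map, hx]; ring
  have hinner : re (inner 𝕜 (adjoint T (T x)) x) = ‖T‖ ^ 2 * ‖x‖ ^ 2 := by
    rw [adjoint_inner_left, inner_self_eq_norm_sq, hx]; ring
  have hsq : ‖adjoint T (T x) - ((‖T‖ ^ 2 : ℝ) : 𝕜) • x‖ ^ 2 ≤ 0 := by
    rw [norm_sub_sq (𝕜 := 𝕜), inner_smul_real_right, RCLike.smul_re, hinner, norm_smul,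
      norm_ofReal, abs_of_nonneg (by positivity)]
    nlinarith [norm_nonneg (adjoint T (T x)), norm_nonneg x]
  rw [← sub_eq_zero, ← norm_eq_zero]
  exact pow_eq_zero_iff two_ne_zero |>.mp (le_antisymm hsq (sq_nonneg _))

theorem IsPositive.apply_eq_smul_of_apply_apply_eq_sq_smul {A : E →L[𝕜] E} (hA : A.IsPositive)
    {c : ℝ} (hc : 0 ≤ c) {x : E} (hx : A (A x) = ((c ^ 2 : ℝ) : 𝕜) • x) :
    A x = (c : 𝕜) • x := by
  obtain rfl | hc := hc.eq_or_lt
  · have : ‖A x‖ ^ 2 = 0 := by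
      rw [← inner_self_eq_norm_sq (𝕜 := 𝕜), hA.inner_left_eq_inner_right, hx]
      simp
    simpa using this
  · set η := A x - (c : 𝕜) • x
    have hη : A η = -(c : 𝕜) • η := by
      simp only [η, map_sub, map_smul, hx, ofReal_pow]; module
    have hcη : c * ‖η‖ ^ 2 ≤ 0 := by
      have := hA.re_inner_nonneg_left η
      rw [hη, neg_smul, inner_neg_left, map_neg, inner_smul_real_left, RCLike.smul_re,
        inner_self_eq_norm_sq] at this
      linarith
    have hη_sq : ‖η‖ ^ 2 ≤ 0 := by nlinarith
    exact sub_eq_zero.mp (by simpa using hη_sq)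

end ContinuousLinearMap

theorem exists_unit_vector_of_normAttainingSet_sphere_general
    {H : Type*} [NormedAddCommGroup H] [InnerProductSpace ℂ H] [CompleteSpace H]
    (T : H →L[ℂ] H)
    (H₀ : Submodule ℂ H) (hH₀ : H₀ ≠ ⊥)
    (hM : {ξ : H | ‖ξ‖ = 1 ∧ ‖T ξ‖ = ‖T‖} = {ξ : H | ξ ∈ H₀ ∧ ‖ξ‖ = 1}) :
    ∃ ξ ∈ H₀, ‖ξ‖ = 1 ∧ CFC.sqrt (star T * T) ξ = ‖T‖ • ξ ∧
      ‖T‖ ^ 2 • (star T * T) ξ = ((star T * T) * (star T * T)) ξ := by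
  obtain ⟨x, hxH₀, hx0⟩ := Submodule.exists_mem_ne_zero_of_ne_bot hH₀
  set ξ := (‖x‖ : ℂ)⁻¹ • x
  have hξH₀ : ξ ∈ H₀ := H₀.smul_mem _ hxH₀
  have hξ1 : ‖ξ‖ = 1 := norm_smul_inv_norm hx0
  have hTξ : ‖T ξ‖ = ‖T‖ * ‖ξ‖ := by
    rw [hξ1, mul_one]; exact ((Set.ext_iff.mp hM ξ).mpr ⟨hξH₀, hξ1⟩).2
  have hSξ : (star T * T) ξ = ‖T‖ ^ 2 • ξ := by
    rw [star_eq_adjoint, RCLike.real_smul_eq_coe_smul (K := ℂ)]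
    exact adjoint_apply_apply_eq_smul_of_norm_apply_eq T hTξ
  have hsqrt : CFC.sqrt (star T * T) ξ = ‖T‖ • ξ := by
    have hpos := (nonneg_iff_isPositive _).mp (CFC.sqrt_nonneg (star T * T))
    rw [RCLike.real_smul_eq_coe_smul (K := ℂ)]
    refine hpos.apply_eq_smul_of_apply_apply_eq_sq_smul (norm_nonneg T) ?_
    rw [← RCLike.real_smul_eq_coe_smul, ← hSξ]
    exact congrArg (· ξ) (CFC.sqrt_mul_sqrt_self _ (star_mul_self_nonneg T))
  refine ⟨ξ, hξH₀, hξ1, hsqrt, ?_⟩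
  change _ = (star T * T) ((star T * T) ξ)
  rw [hSξ, map_smul_of_tower, hSξ]

/-- Let `H` be infinite dimensional, `T ∈ B(H)`, and suppose the norm-attaining set `M_T`
is the unit sphere of a finite-dimensional nonzero subspace `H₀` with `‖T‖_{H₀ᗮ} < ‖T‖`.
Then there is a unit vector `ξ ∈ H₀` with `|T|ξ = ‖T‖ξ` and `‖T‖²(T*T)ξ = (T*T)²ξ`. -/
theorem exists_unit_vector_of_normAttainingSet_sphere
    {H : Type*} [NormedAddCommGroup H] [InnerProductSpace ℂ H] [CompleteSpace H]
    (hinf : ¬ FiniteDimensional ℂ H) (T : H →L[ℂ] H)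
    (H₀ : Submodule ℂ H) (hH₀ : H₀ ≠ ⊥) [FiniteDimensional ℂ H₀]
    (hM : {ξ : H | ‖ξ‖ = 1 ∧ ‖T ξ‖ = ‖T‖} = {ξ : H | ξ ∈ H₀ ∧ ‖ξ‖ = 1})
    (hsup : (⨆ ξ : {ξ : H // ξ ∈ H₀ᗮ ∧ ‖ξ‖ = 1}, ‖T ξ.1‖) < ‖T‖) :
    ∃ ξ ∈ H₀, ‖ξ‖ = 1 ∧ CFC.sqrt (star T * T) ξ = ‖T‖ • ξ ∧
      ‖T‖ ^ 2 • (star T * T) ξ = ((star T * T) * (star T * T)) ξ :=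
  exists_unit_vector_of_normAttainingSet_sphere_general T H₀ hH₀ hM
end

section
/- Let A be a C*-algebra, let V be an inner product C*-module over A, let ε ∈ [0, 1/2), and let x, y ∈ V. Then: (a) if x is ε-orthogonal to y (∥⟨x, y⟩∥ ≤ ε∥x∥∥y∥), then x is approximately strongly Birkhoff–James orthogonal to y (x ⊥^s_{B^ε} y); and (b) if x ⊥^s_{B^ε} y, then x is approximately Birkhoff–James orthogonal to y, i.e. ∥x + λy∥² ≥ ∥x∥² − 2ε·|λ|·∥x∥·∥y∥ for all λ ∈ ℂ. -/
open scoped RightActions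

/-- The December 2024 Mathlib `CStarModule` (right Hilbert C*-module: `A` acts on the right
through `SMul Aᵐᵒᵖ E`), restated since Mathlib's `CStarModule` is now a left-module notion. -/
class CStarModuleRight (A : outParam <| Type*) (E : Type*) [NonUnitalSemiring A] [StarRing A]
    [Module ℂ A] [AddCommGroup E] [Module ℂ E] [PartialOrder A] [SMul Aᵐᵒᵖ E] [Norm A] [Norm E]
    extends Inner A E where
  inner_add_right {x} {y} {z} : inner x (y + z) = inner x y + inner x z
  inner_self_nonneg {x} : 0 ≤ inner x x
  inner_self {x} : inner x x = 0 ↔ x = 0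
  inner_op_smul_right {a : A} {x y : E} : inner x (y <• a) = inner x y * a
  inner_smul_right_complex {z : ℂ} {x} {y} : inner x (z • y) = z • inner x y
  star_inner x y : star (inner x y) = inner y x
  norm_eq_sqrt_norm_inner_self x : ‖x‖ = √‖inner x x‖

/-!
(a) Writing `⟨x, x⟩ = ⟨x, x + y a⟩ - ⟨x, y⟩ a` and applying Cauchy–Schwarz gives
`t² ≤ tN + ‖⟨x, y⟩‖ ‖a‖` for `t = ‖x‖`, `N = ‖x + y a‖`; since `t² - 2(t² - tN) = N² - (t - N)²`,
this yields `‖x‖² - 2 ‖⟨x, y⟩‖ ‖a‖ ≤ ‖x + y a‖²`.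
(b) `A` need not be unital, so `λ y` is not of the form `y a`; but it is the limit of `y (λ e)`
along an increasing approximate unit `e`, and there `‖λ e‖ ≤ |λ|`.
-/

open scoped InnerProductSpace
open Filter Topology

namespace CStarModuleRight

variable {A : Type*} [NonUnitalCStarAlgebra A] [PartialOrder A]
  {E : Type*} [NormedAddCommGroup E] [NormedSpace ℂ E] [SMul Aᵐᵒᵖ E] [CStarModuleRight A E]

lemma inner_neg_right {x y : E} : ⟪x, -y⟫_A = -⟪x, y⟫_A := by
  rw [← neg_one_smul ℂ y, inner_smul_right_complex, neg_one_smul]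

lemma inner_sub_right {x y z : E} : ⟪x, y - z⟫_A = ⟪x, y⟫_A - ⟪x, z⟫_A := by
  rw [sub_eq_add_neg, inner_add_right, inner_neg_right, ← sub_eq_add_neg]

lemma inner_sub_left {x y z : E} : ⟪x - y, z⟫_A = ⟪x, z⟫_A - ⟪y, z⟫_A := by
  rw [← star_inner z, inner_sub_right, star_sub, star_inner, star_inner]

lemma inner_op_smul_left {a : A} {x y : E} : ⟪x <• a, y⟫_A = star a * ⟪x, y⟫_A := by
  rw [← star_inner y, inner_op_smul_right, star_mul, star_inner]

lemma inner_smul_right_real {r : ℝ} {x y : E} : ⟪x, r • y⟫_A = r • ⟪x, y⟫_A := by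
  rw [RCLike.real_smul_eq_coe_smul (K := ℂ), inner_smul_right_complex,
    ← RCLike.real_smul_eq_coe_smul]

lemma inner_smul_left_real {r : ℝ} {x y : E} : ⟪r • x, y⟫_A = r • ⟪x, y⟫_A := by
  rw [← star_inner y, inner_smul_right_real, star_smul, star_trivial, star_inner]

lemma inner_zero_right {x : E} : ⟪x, 0⟫_A = 0 := by
  rw [← zero_smul ℂ (0 : E), inner_smul_right_complex, zero_smul]

lemma isSelfAdjoint_inner_self {x : E} : IsSelfAdjoint ⟪x, x⟫_A := star_inner _ _

lemma ext_inner_left {x y : E} (h : ∀ z : E, ⟪z, x⟫_A = ⟪z, y⟫_A) : x = y := by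
  rw [← sub_eq_zero, ← inner_self (A := A), inner_sub_right, h, sub_self]

lemma op_smul_complex_smul (x : E) (z : ℂ) (a : A) : x <• (z • a) = z • (x <• a) :=
  ext_inner_left (A := A) fun w ↦ by
    rw [inner_op_smul_right, inner_smul_right_complex, inner_op_smul_right, mul_smul_comm]

lemma norm_inner_symm (x y : E) : ‖⟪x, y⟫_A‖ = ‖⟪y, x⟫_A‖ := by
  rw [← star_inner y, norm_star]

variable (A) in
lemma norm_sq_eq_norm_inner_self (x : E) : ‖x‖ ^ 2 = ‖⟪x, x⟫_A‖ := by
  rw [norm_eq_sqrt_norm_inner_self (A := A) x, Real.sq_sqrt (norm_nonneg _)]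

lemma sq_norm_op_smul_sub_self_le {y : E} {e : A} (he : ‖e‖ ≤ 1) :
    ‖y <• e - y‖ ^ 2 ≤ 2 * ‖⟪y, y⟫_A * e - ⟪y, y⟫_A‖ := by
  set z := y <• e - y
  have hzy : ⟪y, z⟫_A = ⟪y, y⟫_A * e - ⟪y, y⟫_A := by
    rw [inner_sub_right, inner_op_smul_right]
  calc ‖z‖ ^ 2 = ‖⟪z, y⟫_A * e - ⟪z, y⟫_A‖ := by
        rw [norm_sq_eq_norm_inner_self A, inner_sub_right, inner_op_smul_right]
    _ ≤ ‖⟪z, y⟫_A‖ * ‖e‖ + ‖⟪z, y⟫_A‖ := (norm_sub_le _ _).trans (by gcongr; exact norm_mul_le _ _)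
    _ ≤ 2 * ‖⟪y, y⟫_A * e - ⟪y, y⟫_A‖ := by
        rw [norm_inner_symm, hzy]
        nlinarith [norm_nonneg (⟪y, y⟫_A * e - ⟪y, y⟫_A)]

lemma _root_.Filter.IsIncreasingApproximateUnit.tendsto_op_smul {l : Filter A}
    (hl : l.IsIncreasingApproximateUnit) (y : E) : Tendsto (fun e : A ↦ y <• e) l (𝓝 y) := by
  rw [tendsto_iff_norm_sub_tendsto_zero]
  have hbound : Tendsto (fun e ↦ √(2 * ‖⟪y, y⟫_A * e - ⟪y, y⟫_A‖)) l (𝓝 0) := by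
    have := (tendsto_iff_norm_sub_tendsto_zero.mp (hl.tendsto_mul_left ⟪y, y⟫_A)).const_mul 2
    simpa using this.sqrt
  refine squeeze_zero' (.of_forall fun _ ↦ norm_nonneg _) ?_ hbound
  filter_upwards [hl.eventually_norm] with e he
  exact (Real.le_sqrt (norm_nonneg _) (by positivity)).mpr (sq_norm_op_smul_sub_self_le he)

variable [StarOrderedRing A]

lemma inner_mul_inner_swap_le {x y : E} : ⟪y, x⟫_A * ⟪x, y⟫_A ≤ ‖x‖ ^ 2 • ⟪y, y⟫_A := by
  rcases eq_or_ne x 0 with rfl | hx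
  · simp [inner_zero_right]
  set c : ℝ := ‖x‖ ^ 2
  set a : A := ⟪x, y⟫_A with ha
  have hyx : ⟪y, x⟫_A = star a := (star_inner x y).symm
  -- Expand `0 ≤ ⟪x a - c y, x a - c y⟫` and bound `a* ⟪x, x⟫ a` by `‖⟪x, x⟫‖ a* a = c a* a`.
  have hexp : ⟪x <• a - c • y, x <• a - c • y⟫_A
      = star a * ⟪x, x⟫_A * a - c • (star a * a) - c • (star a * a) + c • (c • ⟪y, y⟫_A) := by
    simp only [inner_sub_left, inner_sub_right, inner_op_smul_left, inner_op_smul_right,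
      inner_smul_left_real, inner_smul_right_real, hyx, ← ha, sub_mul, smul_mul_assoc, smul_sub]
    abel
  have hconj : star a * ⟪x, x⟫_A * a ≤ c • (star a * a) := by
    simpa only [c, norm_sq_eq_norm_inner_self A x] using
      CStarAlgebra.star_left_conjugate_le_norm_smul (a := a) isSelfAdjoint_inner_self
  have h0 : c • (star a * a) ≤ c • (c • ⟪y, y⟫_A) := by
    rw [← sub_nonneg]
    calc 0 ≤ ⟪x <• a - c • y, x <• a - c • y⟫_A := inner_self_nonneg
      _ = _ := hexp
      _ ≤ c • (star a * a) - c • (star a * a) - c • (star a * a) + c • (c • ⟪y, y⟫_A) := by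
        gcongr
      _ = _ := by abel
  rw [hyx]
  exact (smul_le_smul_iff_of_pos_left (by positivity : 0 < c)).mp h0

variable (E) in
lemma norm_inner_le {x y : E} : ‖⟪x, y⟫_A‖ ≤ ‖x‖ * ‖y‖ := by
  refine le_of_sq_le_sq ?_ (by positivity)
  calc ‖⟪x, y⟫_A‖ ^ 2 = ‖⟪y, x⟫_A * ⟪x, y⟫_A‖ := by
        rw [← star_inner x, CStarRing.norm_star_mul_self, sq]
    _ ≤ ‖‖x‖ ^ 2 • ⟪y, y⟫_A‖ := by
        refine CStarAlgebra.norm_le_norm_of_nonneg_of_le ?_ inner_mul_inner_swap_le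
        rw [← star_inner x]
        exact star_mul_self_nonneg _
    _ = (‖x‖ * ‖y‖) ^ 2 := by
        rw [norm_smul, ← norm_sq_eq_norm_inner_self A y, Real.norm_of_nonneg (by positivity),
          mul_pow]

lemma sq_norm_sub_le_sq_norm_add_op_smul (x y : E) (a : A) :
    ‖x‖ ^ 2 - 2 * (‖⟪x, y⟫_A‖ * ‖a‖) ≤ ‖x + y <• a‖ ^ 2 := by
  have hCS : ‖x‖ ^ 2 ≤ ‖x‖ * ‖x + y <• a‖ + ‖⟪x, y⟫_A‖ * ‖a‖ :=
    calc ‖x‖ ^ 2 = ‖⟪x, x + y <• a⟫_A - ⟪x, y⟫_A * a‖ := by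
          rw [norm_sq_eq_norm_inner_self A, inner_add_right, inner_op_smul_right,
            add_sub_cancel_right]
      _ ≤ ‖⟪x, x + y <• a⟫_A‖ + ‖⟪x, y⟫_A * a‖ := norm_sub_le _ _
      _ ≤ ‖x‖ * ‖x + y <• a‖ + ‖⟪x, y⟫_A‖ * ‖a‖ := by
          gcongr
          · exact norm_inner_le E
          · exact norm_mul_le _ _
  calc ‖x‖ ^ 2 - 2 * (‖⟪x, y⟫_A‖ * ‖a‖) ≤ 2 * (‖x‖ * ‖x + y <• a‖) - ‖x‖ ^ 2 := by linarith
    _ ≤ ‖x + y <• a‖ ^ 2 := by nlinarith [sq_nonneg (‖x‖ - ‖x + y <• a‖)]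

end CStarModuleRight

def ApproxStrongBirkhoffOrthogonal (A : Type*) {E : Type*} [Norm A] [NormedAddCommGroup E]
    [SMul Aᵐᵒᵖ E] (ε : ℝ) (x y : E) : Prop :=
  ∀ a : A, ‖x‖ ^ 2 - 2 * ε * ‖a‖ * ‖x‖ * ‖y‖ ≤ ‖x + y <• a‖ ^ 2

def ApproxBirkhoffOrthogonal {E : Type*} [NormedAddCommGroup E] [NormedSpace ℂ E] (ε : ℝ)
    (x y : E) : Prop :=
  ∀ lam : ℂ, ‖x‖ ^ 2 - 2 * ε * ‖lam‖ * ‖x‖ * ‖y‖ ≤ ‖x + lam • y‖ ^ 2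

section

open CStarModuleRight

variable {A : Type*} [NonUnitalCStarAlgebra A] [PartialOrder A] [StarOrderedRing A]
  {E : Type*} [NormedAddCommGroup E] [NormedSpace ℂ E] [SMul Aᵐᵒᵖ E] [CStarModuleRight A E]
  {ε : ℝ} {x y : E}

lemma approxStrongBirkhoffOrthogonal_of_norm_inner_le (h : ‖⟪x, y⟫_A‖ ≤ ε * ‖x‖ * ‖y‖) :
    ApproxStrongBirkhoffOrthogonal A ε x y := fun a ↦ by
  have := mul_le_mul_of_nonneg_right h (norm_nonneg a)
  linarith [sq_norm_sub_le_sq_norm_add_op_smul x y a]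

lemma ApproxStrongBirkhoffOrthogonal.approxBirkhoffOrthogonal (hε : 0 ≤ ε)
    (h : ApproxStrongBirkhoffOrthogonal A ε x y) : ApproxBirkhoffOrthogonal ε x y := fun lam ↦ by
  have hl := CStarAlgebra.increasingApproximateUnit A
  have hlim : Tendsto (fun e : A ↦ x + y <• (lam • e)) (CStarAlgebra.approximateUnit A)
      (𝓝 (x + lam • y)) := by
    simp only [op_smul_complex_smul]
    exact tendsto_const_nhds.add ((hl.tendsto_op_smul y).const_smul lam)
  refine ge_of_tendsto (hlim.norm.pow 2) ?_
  filter_upwards [hl.eventually_norm] with e he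
  refine le_trans ?_ (h (lam • e))
  have : ‖lam • e‖ ≤ ‖lam‖ := by
    rw [norm_smul]
    exact mul_le_of_le_one_right (norm_nonneg lam) he
  gcongr

end

theorem approx_orthogonal_imp_approx_strong_birkhoff_imp_approx_birkhoff_general
    {A : Type*} [NonUnitalCStarAlgebra A] [PartialOrder A] [StarOrderedRing A]
    {E : Type*} [NormedAddCommGroup E] [NormedSpace ℂ E] [SMul Aᵐᵒᵖ E] [CStarModuleRight A E]
    (ε : ℝ) (hε : 0 ≤ ε) (x y : E) :
    ((‖(inner A x y : A)‖ ≤ ε * ‖x‖ * ‖y‖) →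
      ∀ a : A, ‖x‖ ^ 2 - 2 * ε * ‖a‖ * ‖x‖ * ‖y‖ ≤ ‖x + y <• a‖ ^ 2) ∧
    ((∀ a : A, ‖x‖ ^ 2 - 2 * ε * ‖a‖ * ‖x‖ * ‖y‖ ≤ ‖x + y <• a‖ ^ 2) →
      ∀ lam : ℂ, ‖x‖ ^ 2 - 2 * ε * ‖lam‖ * ‖x‖ * ‖y‖ ≤ ‖x + lam • y‖ ^ 2) :=
  ⟨approxStrongBirkhoffOrthogonal_of_norm_inner_le,
    ApproxStrongBirkhoffOrthogonal.approxBirkhoffOrthogonal hε⟩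

/-- For `ε ∈ [0, 1/2)` and elements `x, y` of an inner product C*-module `E` over a
C*-algebra `A`: (a) `x ⊥^ε y` implies `x ⊥^s_{B^ε} y`, and (b) `x ⊥^s_{B^ε} y` implies
`x ⊥^ε_B y`. -/
theorem approx_orthogonal_imp_approx_strong_birkhoff_imp_approx_birkhoff
    {A : Type*} [NonUnitalCStarAlgebra A] [PartialOrder A] [StarOrderedRing A]
    {E : Type*} [NormedAddCommGroup E] [NormedSpace ℂ E] [SMul Aᵐᵒᵖ E] [CStarModuleRight A E]
    (ε : ℝ) (hε : 0 ≤ ε) (hε' : ε < 1 / 2) (x y : E) :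
    ((‖(inner A x y : A)‖ ≤ ε * ‖x‖ * ‖y‖) →
      ∀ a : A, ‖x‖ ^ 2 - 2 * ε * ‖a‖ * ‖x‖ * ‖y‖ ≤ ‖x + y <• a‖ ^ 2) ∧
    ((∀ a : A, ‖x‖ ^ 2 - 2 * ε * ‖a‖ * ‖x‖ * ‖y‖ ≤ ‖x + y <• a‖ ^ 2) →
      ∀ lam : ℂ, ‖x‖ ^ 2 - 2 * ε * ‖lam‖ * ‖x‖ * ‖y‖ ≤ ‖x + lam • y‖ ^ 2) :=
  approx_orthogonal_imp_approx_strong_birkhoff_imp_approx_birkhoff_general ε hε x y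
end

section
/- Let A be a C*-algebra, let V be an inner product C*-module over A, let ε ∈ [0, 1), and let x, y ∈ V. If there exists a state φ on A such that φ(⟨x, x⟩) = ∥x∥² and |φ(⟨x, y⟩·a)| ≤ ε·∥a∥·∥x∥·∥y∥ for all a ∈ A, then x is approximately strongly Birkhoff–James orthogonal to y (x ⊥^s_{B^ε} y). -/
/-!
Put `z = x + y <• a`. Then `⟪z, z⟫ = ⟪x, x⟫ + ⟪x, y⟫ a + (⟪x, y⟫ a)⋆ + a⋆ ⟪y, y⟫ a`, and the
last term is positive. A positive functional `φ` is star-preserving, so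
`Re φ⟪z, z⟫ ≥ φ⟪x, x⟫ + 2 Re φ(⟪x, y⟫ a) ≥ ‖x‖² - 2ε‖a‖‖x‖‖y‖`,
while `Re φ⟪z, z⟫ ≤ ‖φ‖ ‖⟪z, z⟫‖ = ‖z‖²` when `φ` is a state.
-/

open scoped ComplexOrder RightActions

/-- The December 2024 Mathlib `CStarModule` (right `A`-module, `⟪x, y <• a⟫ = ⟪x, y⟫ * a`),
reproduced verbatim: Mathlib's `CStarModule` is now a left-module class. -/
class OldCStarModule (A E : Type*) [NonUnitalSemiring A] [StarRing A] [Module ℂ A]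
    [AddCommGroup E] [Module ℂ E] [PartialOrder A] [SMul Aᵐᵒᵖ E] [Norm A] [Norm E]
    extends Inner A E where
  inner_add_right {x} {y} {z} : inner x (y + z) = inner x y + inner x z
  inner_self_nonneg {x} : 0 ≤ inner x x
  inner_self {x} : inner x x = 0 ↔ x = 0
  inner_op_smul_right {a : A} {x y : E} : inner x (y <• a) = inner x y * a
  inner_smul_right_complex {z : ℂ} {x} {y} : inner x (z • y) = z • inner x y
  star_inner x y : star (inner x y) = inner y x
  norm_eq_sqrt_norm_inner_self x : ‖x‖ = √‖inner x x‖

namespace OldCStarModule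

section Algebraic

variable {A E : Type*} [NonUnitalSemiring A] [StarRing A] [Module ℂ A] [AddCommGroup E]
  [Module ℂ E] [PartialOrder A] [SMul Aᵐᵒᵖ E] [Norm A] [Norm E] [OldCStarModule A E]

lemma inner_add_left {x y z : E} : inner A (x + y) z = inner A x z + inner A y z := by
  rw [← star_inner, inner_add_right, star_add, star_inner, star_inner]

lemma inner_op_smul_left {a : A} {x y : E} : inner A (x <• a) y = star a * inner A x y := by
  rw [← star_inner, inner_op_smul_right, star_mul, star_inner]

lemma inner_add_op_smul_self (x y : E) (a : A) :
    inner A (x + y <• a) (x + y <• a) = inner A x x + inner A x y * a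
      + star (inner A x y * a) + star a * inner A y y * a := by
  simp only [inner_add_left, inner_add_right, inner_op_smul_right, inner_op_smul_left, star_mul,
    star_inner]
  noncomm_ring

end Algebraic

variable {A E : Type*} [NonUnitalCStarAlgebra A] [PartialOrder A] [AddCommGroup E]
  [Module ℂ E] [SMul Aᵐᵒᵖ E] [Norm E] [OldCStarModule A E]

lemma sq_norm_eq_norm_inner_self (x : E) : ‖x‖ ^ 2 = ‖inner A x x‖ := by
  rw [norm_eq_sqrt_norm_inner_self (A := A) x, Real.sq_sqrt (norm_nonneg _)]

lemma re_apply_inner_self_le (φ : A →L[ℂ] ℂ) (x : E) :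
    (φ (inner A x x)).re ≤ ‖φ‖ * ‖x‖ ^ 2 :=
  calc (φ (inner A x x)).re ≤ ‖φ (inner A x x)‖ := Complex.re_le_norm _
    _ ≤ ‖φ‖ * ‖inner A x x‖ := φ.le_opNorm _
    _ = ‖φ‖ * ‖x‖ ^ 2 := by rw [sq_norm_eq_norm_inner_self (A := A)]

lemma re_apply_inner_self_add_two_mul_re_le [StarOrderedRing A] (φ : A →ₚ[ℂ] ℂ) (x y : E)
    (a : A) :
    (φ (inner A x x)).re + 2 * (φ (inner A x y * a)).re
      ≤ (φ (inner A (x + y <• a) (x + y <• a))).re := by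
  have h_conj : 0 ≤ φ (star a * inner A y y * a) :=
    φ.map_nonneg (star_left_conjugate_nonneg inner_self_nonneg a)
  rw [inner_add_op_smul_self, map_add, map_add, map_add, map_star, Complex.add_re,
    Complex.add_re, Complex.add_re, Complex.star_def, Complex.conj_re]
  linarith [(Complex.nonneg_iff.mp h_conj).1]

end OldCStarModule

open OldCStarModule in
theorem approx_strong_birkhoff_orthogonal_of_state_general
    {A : Type*} [NonUnitalCStarAlgebra A] [PartialOrder A] [StarOrderedRing A]
    {E : Type*} [NormedAddCommGroup E] [NormedSpace ℂ E] [SMul Aᵐᵒᵖ E] [OldCStarModule A E]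
    (ε : ℝ) (x y : E)
    (h : ∃ φ : A →L[ℂ] ℂ, ‖φ‖ = 1 ∧ (∀ a : A, 0 ≤ a → 0 ≤ φ a) ∧
      φ (inner A x x : A) = (‖x‖ : ℂ) ^ 2 ∧
      ∀ a : A, ‖φ ((inner A x y : A) * a)‖ ≤ ε * ‖a‖ * ‖x‖ * ‖y‖) :
    ∀ a : A, ‖x‖ ^ 2 - 2 * ε * ‖a‖ * ‖x‖ * ‖y‖ ≤ ‖x + y <• a‖ ^ 2 := by
  obtain ⟨φ, hφ_norm, hφ_pos, hφ_x, hφ_xy⟩ := h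
  intro a
  have h_expand : (φ (inner A x x)).re + 2 * (φ (inner A x y * a)).re
      ≤ (φ (inner A (x + y <• a) (x + y <• a))).re :=
    re_apply_inner_self_add_two_mul_re_le (.mk₀ φ.toLinearMap hφ_pos) x y a
  have h_cross : -(ε * ‖a‖ * ‖x‖ * ‖y‖) ≤ (φ (inner A x y * a)).re :=
    (abs_le.mp ((Complex.abs_re_le_norm _).trans (hφ_xy a))).1
  have h_upper := re_apply_inner_self_le φ (x + y <• a)
  have h_x : (φ (inner A x x)).re = ‖x‖ ^ 2 := by rw [hφ_x]; norm_cast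
  rw [hφ_norm, one_mul] at h_upper
  linarith

/-- Let `ε ∈ [0, 1)` and let `x, y` be elements of an inner product C*-module `E` over a
C*-algebra `A`. If there exists a state `φ` on `A` with `φ(⟪x, x⟫) = ‖x‖²` and
`|φ(⟪x, y⟫ a)| ≤ ε ‖a‖ ‖x‖ ‖y‖` for all `a ∈ A`, then `x ⊥^s_{B^ε} y`. -/
theorem approx_strong_birkhoff_orthogonal_of_state
    {A : Type*} [NonUnitalCStarAlgebra A] [PartialOrder A] [StarOrderedRing A]
    {E : Type*} [NormedAddCommGroup E] [NormedSpace ℂ E] [SMul Aᵐᵒᵖ E] [OldCStarModule A E]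
    (ε : ℝ) (hε : 0 ≤ ε) (hε' : ε < 1) (x y : E)
    (h : ∃ φ : A →L[ℂ] ℂ, ‖φ‖ = 1 ∧ (∀ a : A, 0 ≤ a → 0 ≤ φ a) ∧
      φ (inner A x x : A) = (‖x‖ : ℂ) ^ 2 ∧
      ∀ a : A, ‖φ ((inner A x y : A) * a)‖ ≤ ε * ‖a‖ * ‖x‖ * ‖y‖) :
    ∀ a : A, ‖x‖ ^ 2 - 2 * ε * ‖a‖ * ‖x‖ * ‖y‖ ≤ ‖x + y <• a‖ ^ 2 :=
  approx_strong_birkhoff_orthogonal_of_state_general ε x y h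
end
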